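/- arXiv:2001.09814 — 9 statements merged into one kernel-verified Lean document; each statement's English description precedes it below -/
import Mathlib

section
/- Let p be an odd prime and n an integer with gcd(n,p)=1. Then the cardinality of D_{n,p} equals (p-1)/4 + (1+(n/p))/2 if p ≡ 1 (mod 4), and equals (p-3)/4 + 1 if p ≡ 3 (mod 4), where (n/p) denotes the Legendre symbol of n modulo p. -/
/-!
A distance `d ∈ [0, p)` occurs iff `x (x - d) ≡ n` has a root `x` with `x ≥ d`. Reading distances
as residues `t`, a root of `x (x - t) = n` exists iff `t² + 4n` is a square, and the root can be
moved to the larger representative by passing from `t` to `-t` (from `d` to `p - d`). For `n ≢ 0`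
the two never both occur unless `t = 0`, and `0` is a distance iff `n` is a square. So twice the
number of distances is `#{t | t² + 4n is a square} + [n is a square]`. The conic `s² - t² = 4n`
has `p - 1` points, which gives `∑ₜ χ(t² + 4n) = -1` and `2 #{t | t² + 4n is a square} = p + χ(-n)`;
altogether `4 |D| = p + 1 + (1 + (-1/p)) (n/p)`.
-/

/-- The modular hyperbola `H_{n,c} = {(x,y) : 0 ≤ x,y < c, x·y ≡ n (mod c)}`. -/
def Hyp (n : ℤ) (c : ℕ) : Set (ℤ × ℤ) :=
  {q : ℤ × ℤ | 0 ≤ q.1 ∧ q.1 < c ∧ 0 ≤ q.2 ∧ q.2 < c ∧ (c : ℤ) ∣ q.1 * q.2 - n}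

/-- The set of distances `D_{n,c} = {|x - y| : (x,y) ∈ H_{n,c}}`. -/
def Dists (n : ℤ) (c : ℕ) : Set ℤ :=
  (fun q : ℤ × ℤ => |q.1 - q.2|) '' Hyp n c

open Finset
open scoped Pointwise

theorem exists_mul_sub_eq_iff_isSquare {K : Type*} [Field K] [NeZero (2 : K)] (b c : K) :
    (∃ x, x * (x - b) = c) ↔ IsSquare (b ^ 2 + 4 * c) := by
  have hdiscrim : discrim 1 (-b) (-c) = b ^ 2 + 4 * c := by rw [discrim]; ring
  constructor
  · rintro ⟨x, hx⟩
    exact ⟨2 * x - b, by linear_combination -4 * hx⟩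
  · rintro ⟨s, hs⟩
    obtain ⟨x, hx⟩ := exists_quadratic_eq_zero one_ne_zero ⟨s, hdiscrim.trans hs⟩
    exact ⟨x, by linear_combination hx⟩

section FiniteField

variable {F : Type*} [Field F] [Fintype F] [DecidableEq F]

theorem card_sq_sub_sq_eq (hF : ringChar F ≠ 2) {c : F} (hc : c ≠ 0) :
    #{q : F × F | q.1 ^ 2 - q.2 ^ 2 = c} = Fintype.card F - 1 := by
  have h2 : (2 : F) ≠ 0 := Ring.two_ne_zero hF
  have hsum : ∀ x y : F, x ^ 2 - y ^ 2 = c → x + y ≠ 0 := by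
    rintro x y hxy hsum
    rw [eq_neg_of_add_eq_zero_right hsum] at hxy
    exact hc (by rw [← hxy]; ring)
  rw [← card_univ, ← card_erase_of_mem (mem_univ (0 : F))]
  -- `x ^ 2 - y ^ 2 = c` factors as `u * v = c` with `u = x + y`, `v = x - y`
  refine card_nbij' (fun q => q.1 + q.2) (fun u => ((u + c / u) / 2, (u - c / u) / 2))
    ?_ ?_ ?_ ?_
  · rintro ⟨x, y⟩ hq
    simp only [coe_filter, mem_coe, mem_erase, mem_univ, and_true, true_and] at hq ⊢
    exact hsum x y hq
  · intro u hu
    simp only [mem_coe, mem_filter, mem_erase, mem_univ, and_true, true_and] at hu ⊢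
    field_simp
    ring
  · rintro ⟨x, y⟩ hq
    simp only [coe_filter, mem_univ, true_and] at hq
    have hv : c / (x + y) = x - y := by
      rw [div_eq_iff (hsum x y hq), ← hq]; ring
    simp only [hv, Prod.mk.injEq]
    constructor <;> field_simp <;> ring
  · intro u _
    simp only
    rw [← add_div, add_add_sub_cancel, ← two_mul, mul_div_cancel_left₀ _ h2]

theorem card_sq_sub_sq_eq_sum (c : F) :
    #{q : F × F | q.1 ^ 2 - q.2 ^ 2 = c} = ∑ t : F, #{s : F | s ^ 2 = t ^ 2 + c} := by
  simp only [card_filter, sub_eq_iff_eq_add']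
  exact Fintype.sum_prod_type_right _

theorem two_mul_ite_isSquare (a : F) :
    2 * (if IsSquare a then 1 else 0 : ℤ) = quadraticChar F a + 1 + if a = 0 then 1 else 0 := by
  by_cases ha : a = 0
  · simp [ha]
  by_cases hsq : IsSquare a
  · simp [ha, hsq, (quadraticChar_one_iff_isSquare ha).2 hsq]
  · simp [ha, hsq, quadraticChar_neg_one_iff_not_isSquare.2 hsq]

theorem card_sq_eq (hF : ringChar F ≠ 2) (a : F) :
    (#{s : F | s ^ 2 = a} : ℤ) = quadraticChar F a + 1 := by
  rw [← quadraticChar_card_sqrts hF, Set.toFinset_ofPred]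

theorem sum_quadraticChar_sq_add (hF : ringChar F ≠ 2) {c : F} (hc : c ≠ 0) :
    ∑ t : F, quadraticChar F (t ^ 2 + c) = -1 := by
  have hcount : ∑ t : F, (quadraticChar F (t ^ 2 + c) + 1) = Fintype.card F - 1 := by
    simp only [← card_sq_eq hF]
    rw [← Nat.cast_sum, ← card_sq_sub_sq_eq_sum, card_sq_sub_sq_eq hF hc,
      Nat.cast_sub Fintype.card_pos, Nat.cast_one]
  rw [sum_add_distrib, sum_const, card_univ, nsmul_one] at hcount
  linarith

theorem two_mul_card_isSquare_sq_add (hF : ringChar F ≠ 2) {c : F} (hc : c ≠ 0) :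
    2 * (#{t : F | IsSquare (t ^ 2 + c)} : ℤ) = Fintype.card F + quadraticChar F (-c) := by
  have hzeros : ∑ t : F, (if t ^ 2 + c = 0 then 1 else 0 : ℤ) = quadraticChar F (-c) + 1 := by
    rw [← card_sq_eq hF, ← natCast_card_filter]
    simp only [add_eq_zero_iff_eq_neg]
  rw [natCast_card_filter, mul_sum]
  simp only [two_mul_ite_isSquare, sum_add_distrib, sum_quadraticChar_sq_add hF hc, hzeros,
    sum_const, card_univ, nsmul_one]
  ring

end FiniteField

theorem mem_dists_iff {n : ℤ} {c : ℕ} {d : ℤ} :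
    d ∈ Dists n c ↔ 0 ≤ d ∧ ∃ a : ℤ, d ≤ a ∧ a < c ∧ (c : ℤ) ∣ a * (a - d) - n := by
  constructor
  · rintro ⟨⟨x, y⟩, ⟨hx0, hxc, hy0, hyc, hdvd⟩, rfl⟩
    dsimp only at hxc hyc hdvd ⊢
    refine ⟨abs_nonneg _, ?_⟩
    rcases le_total y x with h | h
    · refine ⟨x, by rw [abs_of_nonneg (sub_nonneg.2 h)]; omega, hxc, ?_⟩
      rwa [abs_of_nonneg (sub_nonneg.2 h), sub_sub_cancel]
    · refine ⟨y, by rw [abs_of_nonpos (sub_nonpos.2 h)]; omega, hyc, ?_⟩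
      rwa [abs_of_nonpos (sub_nonpos.2 h), sub_neg_eq_add, add_sub_cancel, mul_comm]
  · rintro ⟨hd0, a, hda, hac, hdvd⟩
    exact ⟨(a, a - d), ⟨by omega, hac, by omega, by omega, hdvd⟩, by simp [abs_of_nonneg hd0]⟩

section Residues

variable {c : ℕ} [NeZero c] {n : ℤ}

open scoped Classical in
/-- Every distance lies in `[0, c)`, so `ZMod.val` identifies `Dists n c` with this set. -/
noncomputable def distResidues (n : ℤ) (c : ℕ) [NeZero c] : Finset (ZMod c) :=
  {t | (t.val : ℤ) ∈ Dists n c}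

theorem mem_distResidues_iff {t : ZMod c} :
    t ∈ distResidues n c ↔ ∃ x : ZMod c, x * (x - t) = n ∧ t.val ≤ x.val := by
  classical
  simp only [distResidues, mem_filter, mem_univ, true_and, mem_dists_iff]
  constructor
  · rintro ⟨-, a, hta, hac, hdvd⟩
    have ha : ((a : ZMod c).val : ℤ) = a := by
      rw [ZMod.val_intCast, Int.emod_eq_of_lt (by omega) hac]
    refine ⟨a, ?_, by omega⟩
    rw [← sub_eq_zero]
    simpa using (ZMod.intCast_zmod_eq_zero_iff_dvd _ _).2 hdvd
  · rintro ⟨x, hx, htx⟩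
    refine ⟨by positivity, x.val, by exact_mod_cast htx, by exact_mod_cast x.val_lt, ?_⟩
    rw [← ZMod.intCast_zmod_eq_zero_iff_dvd]
    simp [hx]

theorem ncard_dists_eq_card_distResidues (n : ℤ) : (Dists n c).ncard = #(distResidues n c) := by
  classical
  have himage : Dists n c = (fun t : ZMod c => (t.val : ℤ)) '' distResidues n c := by
    ext d
    simp only [distResidues, coe_filter, mem_univ, true_and, Set.mem_image, Set.mem_ofPred_eq]
    constructor
    · intro hd
      obtain ⟨hd0, a, hda, hac, -⟩ := mem_dists_iff.1 hd
      refine ⟨d, ?_, ?_⟩ <;> rw [ZMod.val_intCast, Int.emod_eq_of_lt hd0 (by omega)]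
      exact hd
    · rintro ⟨t, ht, rfl⟩
      exact ht
  have hinj : Function.Injective fun t : ZMod c => (t.val : ℤ) :=
    Nat.cast_injective.comp (ZMod.val_injective c)
  rw [himage, Set.ncard_image_of_injective _ hinj, Set.ncard_coe_finset]

theorem mem_distResidues_or_neg_mem_iff (t : ZMod c) :
    t ∈ distResidues n c ∨ -t ∈ distResidues n c ↔ ∃ x : ZMod c, x * (x - t) = n := by
  simp only [mem_distResidues_iff]
  constructor
  · rintro (⟨x, hx, -⟩ | ⟨y, hy, -⟩)
    · exact ⟨x, hx⟩
    · exact ⟨-y, by linear_combination hy⟩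
  · rintro ⟨x, hx⟩
    by_cases htx : t.val ≤ x.val
    · exact Or.inl ⟨x, hx, htx⟩
    -- otherwise the root `x - t` of `y * (y + t) = n` has a representative at least `(-t).val`
    have ht : t ≠ 0 := by rintro rfl; simp at htx
    have hxt : x.val + (-t).val < c := by
      rw [ZMod.neg_val, if_neg ht]
      have := t.val_lt
      omega
    refine Or.inr ⟨x - t, by linear_combination hx, ?_⟩
    rw [sub_eq_add_neg, ZMod.val_add_of_lt hxt]
    omega

theorem zero_mem_distResidues_iff : 0 ∈ distResidues n c ↔ IsSquare (n : ZMod c) := by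
  simp [mem_distResidues_iff, IsSquare, eq_comm]

end Residues

section Prime

variable {p : ℕ} [Fact p.Prime] {n : ℤ}

theorem eq_zero_of_mem_distResidues_of_neg_mem (hn : (n : ZMod p) ≠ 0) {t : ZMod p}
    (ht : t ∈ distResidues n p) (ht' : -t ∈ distResidues n p) : t = 0 := by
  obtain ⟨x, hx, htx⟩ := mem_distResidues_iff.1 ht
  obtain ⟨y, hy, hty⟩ := mem_distResidues_iff.1 ht'
  by_contra ht0
  rw [ZMod.neg_val, if_neg ht0] at hty
  have hroots : (x + y) * (x - t - y) = 0 := by linear_combination hx - hy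
  rcases mul_eq_zero.1 hroots with hxy | hxy
  · have hx0 : x ≠ 0 := by rintro rfl; simp [eq_comm] at hx; exact hn hx
    rw [eq_neg_of_add_eq_zero_right hxy, ZMod.neg_val, if_neg hx0] at hty
    have hxt : x = t := ZMod.val_injective p (by have := t.val_lt; omega)
    exact hn (by rw [← hx, hxt, sub_self, mul_zero])
  · rw [← sub_eq_zero.1 hxy, ZMod.val_sub htx] at hty
    have := x.val_lt
    omega

theorem card_isSquare_sq_add_four_mul_add_ite (hn : (n : ZMod p) ≠ 0) [NeZero (2 : ZMod p)] :
    #{t : ZMod p | IsSquare (t ^ 2 + 4 * n)} + (if IsSquare (n : ZMod p) then 1 else 0) =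
      2 * #(distResidues n p) := by
  set E := distResidues n p
  have hunion : E ∪ -E = ({t : ZMod p | IsSquare (t ^ 2 + 4 * n)} : Finset (ZMod p)) := by
    ext t
    rw [mem_union, mem_neg', mem_distResidues_or_neg_mem_iff, exists_mul_sub_eq_iff_isSquare,
      mem_filter, and_iff_right (mem_univ t)]
  have hinter : E ∩ -E = {t ∈ E | t = 0} := by
    ext t
    rw [mem_inter, mem_neg', mem_filter]
    constructor
    · rintro ⟨ht, ht'⟩
      exact ⟨ht, eq_zero_of_mem_distResidues_of_neg_mem hn ht ht'⟩
    · rintro ⟨ht, rfl⟩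
      rwa [neg_zero, and_self]
  have hcard : #(E ∩ -E) = if IsSquare (n : ZMod p) then 1 else 0 := by
    have h0 : 0 ∈ E ↔ IsSquare (n : ZMod p) := zero_mem_distResidues_iff
    rw [hinter, filter_eq']
    by_cases hsq : IsSquare (n : ZMod p)
    · rw [if_pos (h0.2 hsq), if_pos hsq, card_singleton]
    · rw [if_neg (mt h0.1 hsq), if_neg hsq, card_empty]
  rw [← hunion, ← hcard, card_union_add_card_inter, card_neg, two_mul]

theorem four_mul_ncard_dists (hp : p ≠ 2) (hn : (n : ZMod p) ≠ 0) :
    4 * ((Dists n p).ncard : ℤ) = p + 1 + (1 + legendreSym p (-1)) * legendreSym p n := by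
  have hF : ringChar (ZMod p) ≠ 2 := by rwa [ZMod.ringChar_zmod_n]
  have h2 : (2 : ZMod p) ≠ 0 := Ring.two_ne_zero hF
  have : NeZero (2 : ZMod p) := ⟨h2⟩
  have h4n : 4 * (n : ZMod p) ≠ 0 := by
    rw [show (4 : ZMod p) = 2 * 2 by norm_num]
    exact mul_ne_zero (mul_ne_zero h2 h2) hn
  have hchar : quadraticChar (ZMod p) (-(4 * n)) = legendreSym p (-1) * legendreSym p n := by
    have : -(4 * (n : ZMod p)) = ((-1 * 2 ^ 2 * n : ℤ) : ZMod p) := by push_cast; ring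
    rw [this, ← legendreSym, legendreSym.mul, legendreSym.mul,
      legendreSym.sq_one' p (by exact_mod_cast h2), mul_one]
  have hsq := two_mul_ite_isSquare (n : ZMod p)
  rw [if_neg hn, add_zero, ← legendreSym] at hsq
  have hsqrts := two_mul_card_isSquare_sq_add hF h4n
  rw [hchar, ZMod.card] at hsqrts
  have hdists := card_isSquare_sq_add_four_mul_add_ite hn
  rw [ncard_dists_eq_card_distResidues]
  zify at hdists
  linear_combination -2 * hdists + hsqrts + hsq

end Prime

theorem stmt_0 (p : ℕ) [Fact p.Prime] (hodd : p ≠ 2) (n : ℤ)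
    (hn : Int.gcd n p = 1) :
    (p % 4 = 1 →
      ((Dists n p).ncard : ℤ) = ((p : ℤ) - 1) / 4 + (1 + legendreSym p n) / 2) ∧
    (p % 4 = 3 →
      ((Dists n p).ncard : ℤ) = ((p : ℤ) - 3) / 4 + 1) := by
  have hn0 : (n : ZMod p) ≠ 0 := fun h =>
    (Nat.prime_iff_prime_int.1 Fact.out).not_isUnit <|
      (Int.isCoprime_iff_gcd_eq_one.2 hn).isUnit_of_dvd'
        ((ZMod.intCast_zmod_eq_zero_iff_dvd _ _).1 h) dvd_rfl
  have hcount := four_mul_ncard_dists hodd hn0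
  rw [legendreSym.at_neg_one hodd] at hcount
  rcases legendreSym.eq_one_or_neg_one p hn0 with hε | hε <;> rw [hε] at hcount ⊢
  all_goals
    refine ⟨fun hp4 => ?_, fun hp4 => ?_⟩
    · rw [ZMod.χ₄_nat_one_mod_four hp4] at hcount; omega
    · rw [ZMod.χ₄_nat_three_mod_four hp4] at hcount; omega
end

section
/- Let p be an odd prime and n an integer with gcd(n,p)=1. Let R̄₁ = {(x,y) ∈ H_{n,p} : y ≤ min(x, p−x)}. Then the map ψ̄ : R̄₁ → D_{n,p} defined by ψ̄(x,y) = |x − y| is a bijection. -/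
/-- The region `R̄₁` of the modular hyperbola. -/
def hypRegion (n : ℤ) (c : ℕ) : Set (ℤ × ℤ) :=
  {q ∈ Hyp n c | q.2 ≤ min q.1 ((c : ℤ) - q.1)}

namespace Hyp

variable {n : ℤ} {c : ℕ} {x y : ℤ}

theorem swap_mem (h : (x, y) ∈ Hyp n c) : (y, x) ∈ Hyp n c := by
  obtain ⟨hx0, hxc, hy0, hyc, hd⟩ := h
  exact ⟨hy0, hyc, hx0, hxc, by rwa [mul_comm]⟩

theorem reflect_mem (h : (x, y) ∈ Hyp n c) (hx : 0 < x) (hy : 0 < y) :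
    ((c : ℤ) - y, (c : ℤ) - x) ∈ Hyp n c := by
  obtain ⟨-, hxc, -, hyc, hd⟩ := h
  refine ⟨by omega, by omega, by omega, by omega, ?_⟩
  have hexpand : ((c : ℤ) - y) * ((c : ℤ) - x) - n = c * (c - x - y) + (x * y - n) := by ring
  rw [hexpand]
  exact dvd_add (dvd_mul_right _ _) hd

theorem exists_mem_hypRegion_of_le (h : (x, y) ∈ Hyp n c) (hyx : y ≤ x) :
    ∃ q ∈ hypRegion n c, |q.1 - q.2| = |x - y| := by
  by_cases hy : y ≤ (c : ℤ) - x
  · exact ⟨(x, y), ⟨h, le_min hyx hy⟩, rfl⟩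
  · have hxc := h.2.1
    refine ⟨((c : ℤ) - y, (c : ℤ) - x), ⟨reflect_mem h (by omega) (by omega), ?_⟩, ?_⟩
    · exact le_min (by omega) (by omega)
    · dsimp only
      rw [sub_sub_sub_cancel_left]

theorem exists_mem_hypRegion (h : (x, y) ∈ Hyp n c) :
    ∃ q ∈ hypRegion n c, |q.1 - q.2| = |x - y| := by
  rcases le_total y x with hyx | hxy
  · exact exists_mem_hypRegion_of_le h hyx
  · rw [abs_sub_comm]
    exact exists_mem_hypRegion_of_le (swap_mem h) hxy

end Hyp

theorem Int.eq_zero_or_eq_of_dvd_of_nonneg_of_le {m a : ℤ} (hdvd : m ∣ a) (ha : 0 ≤ a)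
    (ham : a ≤ m) : a = 0 ∨ a = m := by
  rcases ha.eq_or_lt with ha | ha
  · exact .inl ha.symm
  · exact .inr (ham.antisymm (Int.le_of_dvd ha hdvd))

theorem hypRegion_eq_of_sub_eq {p : ℕ} [Fact p.Prime] {n x y x' y' : ℤ}
    (h : (x, y) ∈ hypRegion n p) (h' : (x', y') ∈ hypRegion n p) (hsub : x - y = x' - y') :
    (x, y) = (x', y') := by
  obtain ⟨⟨hx0, -, hy0, hyp, hd⟩, hy⟩ := h
  obtain ⟨⟨-, -, hy0', hyp', hd'⟩, hy'⟩ := h'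
  simp only [le_min_iff] at hy hy'
  suffices y = y' by rw [Prod.mk.injEq]; omega
  have hfactor : x * y - x' * y' = (y - y') * (x + y') := by
    linear_combination y' * hsub
  have hdvd : (p : ℤ) ∣ (y - y') * (x + y') := by
    rw [← hfactor, ← sub_sub_sub_cancel_right _ _ n]
    exact dvd_sub hd hd'
  rcases (Nat.prime_iff_prime_int.mp Fact.out).dvd_mul.mp hdvd with hdy | hdx
  · have := Int.eq_zero_of_abs_lt_dvd hdy (by rw [abs_lt]; omega)
    omega
  -- `x + y' = x' + y`, so adding the bounds `x + y ≤ p` and `x' + y' ≤ p` gives `x + y' ≤ p`.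
  · rcases Int.eq_zero_or_eq_of_dvd_of_nonneg_of_le hdx (by omega) (by omega) with h0 | hp <;>
      omega

theorem injOn_abs_sub_hypRegion {p : ℕ} [Fact p.Prime] {n : ℤ} :
    Set.InjOn (fun q : ℤ × ℤ => |q.1 - q.2|) (hypRegion n p) := by
  rintro ⟨x, y⟩ h ⟨x', y'⟩ h' heq
  have hyx : y ≤ x := h.2.trans (min_le_left _ _)
  have hyx' : y' ≤ x' := h'.2.trans (min_le_left _ _)
  dsimp only at heq
  rw [abs_of_nonneg (sub_nonneg.mpr hyx), abs_of_nonneg (sub_nonneg.mpr hyx')] at heq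
  exact hypRegion_eq_of_sub_eq h h' heq

theorem stmt_4_general (p : ℕ) [Fact p.Prime] (n : ℤ) :
    Set.BijOn (fun q : ℤ × ℤ => |q.1 - q.2|)
      {q ∈ Hyp n p | q.2 ≤ min q.1 ((p : ℤ) - q.1)}
      (Dists n p) := by
  refine ⟨fun q hq => ⟨q, hq.1, rfl⟩, injOn_abs_sub_hypRegion, ?_⟩
  rintro d ⟨⟨x, y⟩, h, rfl⟩
  exact Hyp.exists_mem_hypRegion h

theorem stmt_4 (p : ℕ) [Fact p.Prime] (hodd : p ≠ 2) (n : ℤ)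
    (hn : Int.gcd n p = 1) :
    Set.BijOn (fun q : ℤ × ℤ => |q.1 - q.2|)
      {q ∈ Hyp n p | q.2 ≤ min q.1 ((p : ℤ) - q.1)}
      (Dists n p) :=
  stmt_4_general p n
end

section
/- Let p be an odd prime and n an integer with gcd(n,p)=1. Then τ(n,p) = |D_{n,p}|, i.e., the number of targets for n modulus p equals the number of distinct distances between coordinates of points of the modular hyperbola H_{n,p}. -/
/-- `(a,b)` is a target for `n` modulus `c`: `a` and `b` are squares in `ℤ/cℤ`
(zero allowed) and `n + a = b` in `ℤ/cℤ`. -/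
def IsTarget (n : ℤ) (c : ℕ) (a b : ZMod c) : Prop :=
  IsSquare a ∧ IsSquare b ∧ (n : ZMod c) + a = b

/-- `τ(n,c)`, the number of targets for `n` modulus `c`. -/
noncomputable def tau (n : ℤ) (c : ℕ) : ℕ :=
  ({ab : ZMod c × ZMod c | IsTarget n c ab.1 ab.2}).ncard

/-! On the hyperbola `x y = n` over `𝔽_p` one has `n + ((x - y) / 2) ^ 2 = ((x + y) / 2) ^ 2`, and
conversely a target `(α², β²)` comes from the point `(β + α, β - α)`; so `(x, y) ↦ ((x - y) / 2) ^ 2`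
maps the hyperbola onto the first coordinates of the targets, which determine the targets.
Two points `(x, y)`, `(u, v)` of the hyperbola have the same image iff `(x - y) ^ 2 = (u - v) ^ 2`;
with `x y = u v` this forces `(x, y)` to be `(u, v)` or `(v, u)` up to a common sign. Swapping keeps
`|x - y|`, and since `n ≠ 0` negation replaces the representatives `r ∈ (0, p)` by `p - r`, which keeps
it too. Hence `d ↦ (d / 2) ^ 2` is a bijection from `D_{n,p}` onto the first coordinates of targets. -/

open Set

section Field

variable {F : Type*} [Field F]

theorem eq_and_eq_or_eq_neg_of_mul_eq_of_sub_sq_eq (h2 : (2 : F) ≠ 0) {x y u v : F}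
    (hmul : x * y = u * v) (hsq : (x - y) ^ 2 = (u - v) ^ 2) :
    (x = u ∧ y = v) ∨ (x = v ∧ y = u) ∨ (x = -u ∧ y = -v) ∨ (x = -v ∧ y = -u) := by
  have hsum : (x + y) ^ 2 = (u + v) ^ 2 := by linear_combination hsq + 4 * hmul
  have solve {s t : F} (hd : x - y = s - t) (hs : x + y = s + t) : x = s ∧ y = t :=
    ⟨mul_left_cancel₀ h2 (by linear_combination hs + hd),
      mul_left_cancel₀ h2 (by linear_combination hs - hd)⟩
  rcases sq_eq_sq_iff_eq_or_eq_neg.1 hsq with hd | hd <;>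
    rcases sq_eq_sq_iff_eq_or_eq_neg.1 hsum with hs | hs
  · exact .inl (solve hd hs)
  · exact .inr <| .inr <| .inr (solve (by linear_combination hd) (by linear_combination hs))
  · exact .inr <| .inl (solve (by linear_combination hd) (by linear_combination hs))
  · exact .inr <| .inr <| .inl (solve (by linear_combination hd) (by linear_combination hs))

theorem image_sq_half_sub_setOf_mul_eq (h2 : (2 : F) ≠ 0) (n : F) :
    (fun q : F × F => ((q.1 - q.2) / 2) ^ 2) '' {q | q.1 * q.2 = n} =
      {a | IsSquare a ∧ IsSquare (n + a)} := by
  ext a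
  constructor
  · rintro ⟨⟨x, y⟩, hxy : x * y = n, rfl⟩
    refine ⟨⟨(x - y) / 2, sq _⟩, ⟨(x + y) / 2, ?_⟩⟩
    field_simp
    linear_combination (-4 : F) * hxy
  · rintro ⟨⟨α, rfl⟩, ⟨β, hβ⟩⟩
    refine ⟨(β + α, β - α), show (β + α) * (β - α) = n by linear_combination -hβ, ?_⟩
    field_simp
    ring

end Field

theorem tau_eq_ncard (n : ℤ) (c : ℕ) :
    tau n c = {a : ZMod c | IsSquare a ∧ IsSquare ((n : ZMod c) + a)}.ncard := by
  have htargets : {ab : ZMod c × ZMod c | IsTarget n c ab.1 ab.2} =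
      (fun a => (a, (n : ZMod c) + a)) '' {a | IsSquare a ∧ IsSquare ((n : ZMod c) + a)} := by
    ext ⟨a, b⟩
    simp only [mem_ofPred_eq, mem_image, Prod.mk.injEq, IsTarget]
    constructor
    · rintro ⟨ha, hb, rfl⟩
      exact ⟨a, ⟨ha, hb⟩, rfl, rfl⟩
    · rintro ⟨a, ⟨ha, hb⟩, rfl, rfl⟩
      exact ⟨ha, hb, rfl⟩
  rw [tau, htargets, ncard_image_of_injective _ fun a b h => congrArg Prod.fst h]

theorem ZMod.isUnit_intCast_of_gcd_eq_one {n : ℤ} {c : ℕ} (hn : Int.gcd n c = 1) :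
    IsUnit (n : ZMod c) := by
  have := (Int.isCoprime_iff_gcd_eq_one.2 hn).intCast (R := ZMod c)
  rwa [Int.cast_natCast, ZMod.natCast_self, isCoprime_zero_right] at this

section ZMod

variable {c : ℕ} [NeZero c]

theorem hyp_eq_image (n : ℤ) :
    Hyp n c = (fun q : ZMod c × ZMod c => ((q.1.val : ℤ), (q.2.val : ℤ))) ''
      {q | q.1 * q.2 = n} := by
  ext ⟨x, y⟩
  constructor
  · rintro ⟨hx0, hxc, hy0, hyc, hdvd⟩
    refine ⟨(x, y), ?_, ?_⟩
    · have := (ZMod.intCast_zmod_eq_zero_iff_dvd _ _).2 hdvd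
      push_cast at this
      exact sub_eq_zero.1 this
    · simp only [ZMod.val_intCast, Int.emod_eq_of_lt hx0 hxc, Int.emod_eq_of_lt hy0 hyc]
  · rintro ⟨⟨a, b⟩, hab, hq⟩
    simp only [Prod.mk.injEq] at hq
    obtain ⟨rfl, rfl⟩ := hq
    refine ⟨by positivity, show (a.val : ℤ) < c by exact_mod_cast a.val_lt, by positivity,
      show (b.val : ℤ) < c by exact_mod_cast b.val_lt,
      (ZMod.intCast_zmod_eq_zero_iff_dvd _ _).1 ?_⟩
    push_cast
    simp only [ZMod.natCast_val, ZMod.cast_id', id]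
    exact sub_eq_zero.2 hab

theorem dists_eq_image (n : ℤ) :
    Dists n c = (fun q : ZMod c × ZMod c => |(q.1.val : ℤ) - q.2.val|) ''
      {q | q.1 * q.2 = n} := by
  rw [Dists, hyp_eq_image, image_image]

theorem ZMod.intCast_abs_val_sub_val_sq (x y : ZMod c) :
    ((|(x.val : ℤ) - y.val| : ℤ) : ZMod c) ^ 2 = (x - y) ^ 2 := by
  rw [← Int.cast_pow, sq_abs]
  push_cast
  simp only [ZMod.natCast_val, ZMod.cast_id', id]

theorem ZMod.abs_val_neg_sub_val_neg {x y : ZMod c} (hx : x ≠ 0) (hy : y ≠ 0) :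
    |((-x).val : ℤ) - (-y).val| = |(x.val : ℤ) - y.val| := by
  rw [ZMod.neg_val, ZMod.neg_val, if_neg hx, if_neg hy, Nat.cast_sub x.val_lt.le,
    Nat.cast_sub y.val_lt.le, ← abs_neg]
  ring_nf

end ZMod

theorem ZMod.abs_val_sub_val_eq_of_mul_eq_of_sub_sq_eq {p : ℕ} [Fact p.Prime]
    (h2 : (2 : ZMod p) ≠ 0) {x y u v : ZMod p} (hmul : x * y = u * v) (huv : u * v ≠ 0)
    (hsq : (x - y) ^ 2 = (u - v) ^ 2) :
    |(x.val : ℤ) - y.val| = |(u.val : ℤ) - v.val| := by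
  have hu : u ≠ 0 := left_ne_zero_of_mul huv
  have hv : v ≠ 0 := right_ne_zero_of_mul huv
  rcases eq_and_eq_or_eq_neg_of_mul_eq_of_sub_sq_eq h2 hmul hsq with
    ⟨rfl, rfl⟩ | ⟨rfl, rfl⟩ | ⟨rfl, rfl⟩ | ⟨rfl, rfl⟩
  · rfl
  · exact abs_sub_comm _ _
  · exact ZMod.abs_val_neg_sub_val_neg hu hv
  · rw [ZMod.abs_val_neg_sub_val_neg hv hu, abs_sub_comm]

theorem stmt_7 (p : ℕ) [Fact p.Prime] (hodd : p ≠ 2) (n : ℤ)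
    (hn : Int.gcd n p = 1) :
    tau n p = (Dists n p).ncard := by
  have h2 : (2 : ZMod p) ≠ 0 := Ring.two_ne_zero (by rwa [ZMod.ringChar_zmod_n])
  let halfSq : ℤ → ZMod p := fun d => ((d : ZMod p) / 2) ^ 2
  have halfSq_dist (q : ZMod p × ZMod p) :
      halfSq |(q.1.val : ℤ) - q.2.val| = ((q.1 - q.2) / 2) ^ 2 := by
    simp only [halfSq, div_pow, ZMod.intCast_abs_val_sub_val_sq]
  have himage : halfSq '' Dists n p = {a | IsSquare a ∧ IsSquare ((n : ZMod p) + a)} := by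
    rw [← image_sq_half_sub_setOf_mul_eq h2, dists_eq_image, image_image]
    simp only [halfSq_dist]
  have hinj : InjOn halfSq (Dists n p) := by
    rw [dists_eq_image]
    rintro _ ⟨q, hq, rfl⟩ _ ⟨q', hq', rfl⟩ h
    rw [halfSq_dist, halfSq_dist, div_pow, div_pow, div_left_inj' (pow_ne_zero 2 h2)] at h
    exact ZMod.abs_val_sub_val_eq_of_mul_eq_of_sub_sq_eq h2 (hq.trans hq'.symm)
      (hq' ▸ (ZMod.isUnit_intCast_of_gcd_eq_one hn).ne_zero) h
  rw [tau_eq_ncard, ← himage, hinj.ncard_image]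
end

section
/- Let n be an integer and let s, t be integers greater than 1 with gcd(s,t) = 1. Then τ(n, s·t) = τ(n,s)·τ(n,t); that is, as a function of the modulus, τ(n,·) is multiplicative. -/
/-! The Chinese remainder isomorphism `ℤ/stℤ ≅ ℤ/sℤ × ℤ/tℤ` is a ring isomorphism, so it
preserves squares and the relation `n + a = b`; squares and that relation in a product are
checked componentwise. Hence it maps the targets modulo `st` bijectively onto pairs of
targets modulo `s` and modulo `t`. -/

lemma Prod.isSquare_iff {α β : Type*} [Mul α] [Mul β] {x : α × β} :
    IsSquare x ↔ IsSquare x.1 ∧ IsSquare x.2 :=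
  ⟨fun ⟨r, hr⟩ => ⟨⟨r.1, congrArg Prod.fst hr⟩, ⟨r.2, congrArg Prod.snd hr⟩⟩,
    fun ⟨⟨r, hr⟩, ⟨q, hq⟩⟩ => ⟨(r, q), Prod.ext hr hq⟩⟩

lemma MulEquiv.isSquare_apply_iff {α β : Type*} [Mul α] [Mul β] (e : α ≃* β) {x : α} :
    IsSquare (e x) ↔ IsSquare x :=
  ⟨fun ⟨r, hr⟩ => ⟨e.symm r, by rw [← map_mul, ← hr, e.symm_apply_apply]⟩,
    fun ⟨r, hr⟩ => ⟨e r, by rw [hr, map_mul]⟩⟩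

section ChineseRemainder

variable {n : ℤ} {s t : ℕ}

lemma isTarget_iff_chineseRemainder (hst : s.Coprime t) {a b : ZMod (s * t)} :
    IsTarget n (s * t) a b ↔
      IsTarget n s (ZMod.chineseRemainder hst a).1 (ZMod.chineseRemainder hst b).1 ∧
        IsTarget n t (ZMod.chineseRemainder hst a).2 (ZMod.chineseRemainder hst b).2 := by
  set e := ZMod.chineseRemainder hst
  have isSquare_iff (x : ZMod (s * t)) : IsSquare x ↔ IsSquare (e x).1 ∧ IsSquare (e x).2 := by
    rw [← Prod.isSquare_iff]
    exact e.toMulEquiv.isSquare_apply_iff.symm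
  have add_eq_iff : (n : ZMod (s * t)) + a = b ↔
      (n : ZMod s) + (e a).1 = (e b).1 ∧ (n : ZMod t) + (e a).2 = (e b).2 := by
    rw [← e.injective.eq_iff, map_add, map_intCast, Prod.ext_iff]
    rfl
  simp only [IsTarget, isSquare_iff a, isSquare_iff b, add_eq_iff]
  tauto

def targetEquivProd (hst : s.Coprime t) :
    {ab : ZMod (s * t) × ZMod (s * t) // IsTarget n (s * t) ab.1 ab.2} ≃
      {ab : ZMod s × ZMod s // IsTarget n s ab.1 ab.2} ×
        {ab : ZMod t × ZMod t // IsTarget n t ab.1 ab.2} :=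
  let e := (ZMod.chineseRemainder hst).toEquiv
  ((e.prodCongr e).trans (Equiv.prodProdProdComm _ _ _ _)).subtypeEquiv
      (fun _ => isTarget_iff_chineseRemainder hst) |>.trans Equiv.subtypeProdEquivProd

end ChineseRemainder

lemma tau_eq_natCard (n : ℤ) (c : ℕ) :
    tau n c = Nat.card {ab : ZMod c × ZMod c // IsTarget n c ab.1 ab.2} :=
  (Nat.card_coe_set_eq _).symm

theorem stmt_8_general (n : ℤ) (s t : ℕ)
    (hst : Nat.Coprime s t) :
    tau n (s * t) = tau n s * tau n t := by
  rw [tau_eq_natCard, tau_eq_natCard, tau_eq_natCard, ← Nat.card_prod]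
  exact Nat.card_congr (targetEquivProd hst)

theorem stmt_8 (n : ℤ) (s t : ℕ) (hs : 1 < s) (ht : 1 < t)
    (hst : Nat.Coprime s t) :
    tau n (s * t) = tau n s * tau n t :=
  stmt_8_general n s t hst
end

section
/- Let p be an odd prime, n an integer with gcd(n,p)=1, and k ≥ 1. If (a,b) is a target for n modulus p^k with a ≠ 0 and b ≠ 0 in ℤ/p^kℤ, then the number of targets (a',b') for n modulus p^{k+1} whose reductions modulo p^k satisfy a' ≡ a (mod p^k) and b' ≡ b (mod p^k) is exactly p. -/
/-!
A target over `(a, b)` modulo `p ^ (k + 1)` is `(x, n + x)` with `x` one of the `p` lifts of `a`,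
and every such pair is a target: a lift `x` of a nonzero square `s ^ 2` modulo `p ^ k` is a
square, because after lifting `x` and `s` to `ℤ_[p]` we have
`‖x - s ^ 2‖ ≤ p ^ (-k) < ‖s ^ 2‖ = ‖2 * s‖ ^ 2` (as `p` is odd), so Hensel's lemma applies to
`X ^ 2 - x` at `s`.
-/

open Polynomial in
theorem PadicInt.isSquare_of_norm_sub_sq_lt {p : ℕ} [Fact p.Prime] (hp : p ≠ 2) {x s : ℤ_[p]}
    (h : ‖x - s ^ 2‖ < ‖s ^ 2‖) : IsSquare x := by
  have hnorm_two : ‖(2 : ℤ_[p])‖ = 1 := by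
    rw [← Nat.cast_ofNat, norm_natCast_eq_one_iff, Nat.coprime_two_right]
    exact (Fact.out : p.Prime).odd_of_ne_two hp
  obtain ⟨z, hz, -⟩ := hensels_lemma (F := X ^ 2 - C x) (a := s) (by
    simpa [norm_sub_rev, one_add_one_eq_two, hnorm_two] using h)
  exact ⟨z, by simpa [sub_eq_zero, sq, eq_comm] using hz⟩

theorem ZMod.isSquare_of_isSquare_castHom {p : ℕ} [Fact p.Prime] (hp : p ≠ 2) {k l : ℕ}
    (hkl : k ≤ l) {x : ZMod (p ^ l)}
    (hsq : IsSquare (ZMod.castHom (pow_dvd_pow p hkl) (ZMod (p ^ k)) x))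
    (hne : ZMod.castHom (pow_dvd_pow p hkl) (ZMod (p ^ k)) x ≠ 0) : IsSquare x := by
  obtain ⟨X, rfl⟩ := ZMod.ringHom_surjective (PadicInt.toZModPow (p := p) l) x
  obtain ⟨t, ht⟩ := hsq
  obtain ⟨S, rfl⟩ := ZMod.ringHom_surjective (PadicInt.toZModPow (p := p) k) t
  have hred : ZMod.castHom (pow_dvd_pow p hkl) (ZMod (p ^ k)) (PadicInt.toZModPow l X) =
      PadicInt.toZModPow k X :=
    RingHom.congr_fun (PadicInt.zmod_cast_comp_toZModPow k l hkl) X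
  rw [hred] at ht hne
  have hclose : ‖X - S ^ 2‖ ≤ (p : ℝ) ^ (-k : ℤ) := by
    rw [PadicInt.norm_le_pow_iff_mem_span_pow, ← PadicInt.ker_toZModPow, RingHom.mem_ker,
      map_sub, map_pow, ht, sq, sub_self]
  have hfar : (p : ℝ) ^ (-k : ℤ) < ‖S ^ 2‖ := by
    rw [← not_le, PadicInt.norm_le_pow_iff_mem_span_pow, ← PadicInt.ker_toZModPow,
      RingHom.mem_ker, map_pow, sq, ← ht]
    exact hne
  exact (PadicInt.isSquare_of_norm_sub_sq_lt hp (hclose.trans_lt hfar)).map _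

theorem AddMonoidHom.ncard_fiber_mul_card {G M : Type*} [AddGroup G] [AddGroup M] [Finite G]
    {f : G →+ M} (hf : Function.Surjective f) (m : M) :
    (f ⁻¹' {m}).ncard * Nat.card M = Nat.card G := by
  rw [← Nat.card_coe_set_eq, Nat.card_congr (f.fiberEquivKerOfSurjective hf m),
    ← AddSubgroup.card_top (G := M), ← f.range_eq_top_of_surjective hf, ← AddSubgroup.index_ker,
    AddSubgroup.card_mul_index]

theorem ZMod.ncard_castHom_fiber (p : ℕ) [NeZero p] (k : ℕ) (a : ZMod (p ^ k)) :
    {x : ZMod (p ^ (k + 1)) | ZMod.castHom (pow_dvd_pow p k.le_succ) (ZMod (p ^ k)) x = a}.ncard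
      = p := by
  have h := AddMonoidHom.ncard_fiber_mul_card
    (f := (ZMod.castHom (pow_dvd_pow p k.le_succ) (ZMod (p ^ k))).toAddMonoidHom)
    (ZMod.ringHom_surjective _) a
  rw [Nat.card_zmod, Nat.card_zmod] at h
  refine Nat.eq_of_mul_eq_mul_left (pow_pos (NeZero.pos p) k) ?_
  rw [← pow_succ, mul_comm]
  exact h

theorem stmt_9_general (p : ℕ) [Fact p.Prime] (hodd : p ≠ 2) (n : ℤ)
    (k : ℕ)
    (a b : ZMod (p ^ k)) (hab : IsTarget n (p ^ k) a b)
    (ha : a ≠ 0) (hb : b ≠ 0) :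
    ({q : ZMod (p ^ (k + 1)) × ZMod (p ^ (k + 1)) |
        IsTarget n (p ^ (k + 1)) q.1 q.2 ∧
        ZMod.castHom (pow_dvd_pow p k.le_succ) (ZMod (p ^ k)) q.1 = a ∧
        ZMod.castHom (pow_dvd_pow p k.le_succ) (ZMod (p ^ k)) q.2 = b}).ncard
      = p := by
  obtain ⟨hsa, hsb, rfl⟩ := hab
  set π := ZMod.castHom (pow_dvd_pow p k.le_succ) (ZMod (p ^ k))
  have hset : {q : ZMod (p ^ (k + 1)) × ZMod (p ^ (k + 1)) |
        IsTarget n (p ^ (k + 1)) q.1 q.2 ∧ π q.1 = a ∧ π q.2 = n + a} =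
      (fun x ↦ (x, (n : ZMod (p ^ (k + 1))) + x)) '' {x | π x = a} := by
    ext ⟨x, y⟩
    simp only [Set.mem_ofPred_eq, Set.mem_image, Prod.mk.injEq]
    constructor
    · rintro ⟨⟨-, -, rfl⟩, hx, -⟩
      exact ⟨x, hx, rfl, rfl⟩
    · rintro ⟨x, hx, rfl, rfl⟩
      have hy : π (n + x) = n + a := by rw [map_add, map_intCast, hx]
      exact ⟨⟨ZMod.isSquare_of_isSquare_castHom hodd k.le_succ (hx ▸ hsa) (hx ▸ ha),
        ZMod.isSquare_of_isSquare_castHom hodd k.le_succ (hy ▸ hsb) (hy ▸ hb), rfl⟩, hx, hy⟩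
  rw [hset, Set.ncard_image_of_injective _ fun x y h ↦ congrArg Prod.fst h]
  exact ZMod.ncard_castHom_fiber p k a

theorem stmt_9 (p : ℕ) [Fact p.Prime] (hodd : p ≠ 2) (n : ℤ)
    (hn : Int.gcd n p = 1) (k : ℕ) (hk : 1 ≤ k)
    (a b : ZMod (p ^ k)) (hab : IsTarget n (p ^ k) a b)
    (ha : a ≠ 0) (hb : b ≠ 0) :
    ({q : ZMod (p ^ (k + 1)) × ZMod (p ^ (k + 1)) |
        IsTarget n (p ^ (k + 1)) q.1 q.2 ∧
        ZMod.castHom (pow_dvd_pow p k.le_succ) (ZMod (p ^ k)) q.1 = a ∧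
        ZMod.castHom (pow_dvd_pow p k.le_succ) (ZMod (p ^ k)) q.2 = b}).ncard
      = p :=
  stmt_9_general p hodd n k a b hab ha hb
end

section
/- Let p be an odd prime, n an integer with gcd(n,p)=1, and k ≥ 1. If (0,b) is a target for n modulus p^k, then the number of targets (a',b') for n modulus p^{k+1} with a' ≡ 0 (mod p^k) and b' ≡ b (mod p^k) equals (p+1)/2 if k is even, and equals 1 if k is odd. -/
/-!
A target `(a', b')` lying over `(0, b)` is determined by `a'`, since `b' = n + a'`. As `p ∤ n`,
the residue `n + a' ≡ n (mod p^k)` is a square modulo `p^k`, hence, by one Newton step (`p` odd),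
modulo `p^(k+1)`; so only the condition that `a'` be a square remains. The residues
`a' ≡ 0 (mod p^k)` are the `p^k t` with `t ∈ ℤ/p`, and comparing `p`-adic valuations in
`s² ≡ p^k t (mod p^(k+1))` shows that for `t ≠ 0` this is solvable iff `k` is even and `t` is a
square mod `p`. So the count is the number `(p+1)/2` of squares in `ℤ/p` for even `k`, and `1`
(only `t = 0`) for odd `k`.
-/

open Finset in
theorem FiniteField.ncard_isSquare {F : Type*} [Field F] [Fintype F] (hF : ringChar F ≠ 2) :
    {a : F | IsSquare a}.ncard = (Fintype.card F + 1) / 2 := by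
  classical
  set Q := (univ : Finset F).image fun x ↦ x * x
  have hQ : {a : F | IsSquare a} = Q := by ext a; simp [Q, IsSquare, eq_comm]
  have h0 : (0 : F) ∈ Q := mem_image.mpr ⟨0, mem_univ _, mul_zero 0⟩
  have hfiber0 : #{x | x * x = (0 : F)} = 1 := by
    rw [← card_singleton (0 : F)]; congr 1; ext; simp
  have hfiber : ∀ a ∈ Q.erase 0, #{x | x * x = a} = 2 := by
    intro a ha
    obtain ⟨ha0, r, rfl⟩ : a ≠ 0 ∧ ∃ r, r * r = a := by simpa [Q] using ha
    have hr : -r ≠ r := by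
      rw [Ne, Ring.eq_self_iff_eq_zero_of_char_ne_two hF]; rintro rfl; simp at ha0
    rw [← card_pair hr.symm]
    congr 1
    ext x
    simp [mul_self_eq_mul_self_iff]
  have hcard := card_eq_sum_card_image (fun x : F ↦ x * x) univ
  rw [← add_sum_erase _ _ h0, hfiber0, sum_congr rfl hfiber, sum_const, smul_eq_mul,
    card_erase_of_mem h0, card_univ] at hcard
  have hodd := FiniteField.odd_card_of_char_ne_two hF
  have hQpos : 0 < #Q := card_pos.mpr ⟨0, h0⟩
  rw [hQ, Set.ncard_coe_finset]
  omega

theorem ZMod.isSquare_intCast_iff (m : ℕ) (N : ℤ) :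
    IsSquare (N : ZMod m) ↔ ∃ s : ℤ, (m : ℤ) ∣ N - s ^ 2 := by
  simp_rw [← ZMod.intCast_eq_intCast_iff_dvd_sub]
  constructor
  · rintro ⟨r, hr⟩
    exact ⟨(r.cast : ℤ), by push_cast [ZMod.intCast_zmod_cast, hr]; ring⟩
  · rintro ⟨s, hs⟩
    exact ⟨s, by rw [← hs]; push_cast; ring⟩

theorem ZMod.isSquare_intCast_pow_succ_of_isSquare {p k : ℕ} (hp : p.Prime) (hodd : p ≠ 2)
    (hk : k ≠ 0) {N : ℤ} (hN : ¬ (p : ℤ) ∣ N) (hsq : IsSquare (N : ZMod (p ^ k))) :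
    IsSquare (N : ZMod (p ^ (k + 1))) := by
  rw [ZMod.isSquare_intCast_iff, Nat.cast_pow] at hsq ⊢
  obtain ⟨s, c, hc⟩ := hsq
  have hpZ : Prime (p : ℤ) := Nat.prime_iff_prime_int.mp hp
  have h2s : ¬ (p : ℤ) ∣ 2 * s := by
    intro hdvd
    rcases hpZ.dvd_mul.mp hdvd with h2 | hs
    · exact hodd ((Nat.prime_dvd_prime_iff_eq hp Nat.prime_two).mp (by exact_mod_cast h2))
    · rw [show N = s ^ 2 + (p : ℤ) ^ k * c by linear_combination hc] at hN
      exact hN (dvd_add (dvd_pow hs two_ne_zero) ((dvd_pow_self _ hk).mul_right c))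
  obtain ⟨u, v, huv⟩ := (hpZ.coprime_iff_not_dvd.mpr h2s).symm
  -- Newton's step: `u` inverts `2 s` modulo `p`
  refine ⟨s + (p : ℤ) ^ k * (u * c), ?_⟩
  have key : N - (s + (p : ℤ) ^ k * (u * c)) ^ 2
      = (p : ℤ) ^ (k + 1) * (v * c) - ((p : ℤ) ^ k) ^ 2 * (u * c) ^ 2 := by
    linear_combination hc - (p : ℤ) ^ k * c * huv
  rw [key]
  refine dvd_sub (dvd_mul_right _ _) (Dvd.dvd.mul_right ?_ _)
  rw [← pow_mul]
  exact pow_dvd_pow _ (by omega)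

theorem Int.even_and_exists_sq_of_pow_succ_dvd {p k : ℕ} [Fact p.Prime] {T S : ℤ}
    (hT : ¬ (p : ℤ) ∣ T) (h : (p : ℤ) ^ (k + 1) ∣ (p : ℤ) ^ k * T - S ^ 2) :
    Even k ∧ ∃ W : ℤ, (p : ℤ) ∣ T - W ^ 2 := by
  have hp0 : (p : ℤ) ≠ 0 := by exact_mod_cast (Fact.out : p.Prime).ne_zero
  obtain ⟨m, hm⟩ := h
  set U := T - p * m with hU
  have hSU : S * S = (p : ℤ) ^ k * U := by linear_combination -hm
  have hUp : ¬ (p : ℤ) ∣ U := fun hd ↦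
    hT (by simpa [hU] using dvd_add hd (dvd_mul_right (p : ℤ) m))
  have hU0 : U ≠ 0 := fun h0 ↦ hUp (h0 ▸ dvd_zero _)
  have hS0 : S ≠ 0 := by
    rintro rfl
    exact mul_ne_zero (pow_ne_zero k hp0) hU0 (by simpa using hSU.symm)
  set j := padicValInt p S
  have hjk : j + j = k := by
    have hval := congrArg (padicValInt p) hSU
    rwa [padicValInt.mul hS0 hS0, padicValInt.mul (pow_ne_zero k hp0) hU0,
      padicValInt.eq_zero_of_not_dvd hUp, add_zero, ← Nat.cast_pow, padicValInt.of_nat,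
      padicValNat.prime_pow] at hval
  obtain ⟨W, hW⟩ := padicValInt_dvd (p := p) S
  refine ⟨⟨j, hjk.symm⟩, W, m, ?_⟩
  have hWU : (p : ℤ) ^ k * W ^ 2 = (p : ℤ) ^ k * U := by
    rw [← hSU, hW, ← hjk]; ring
  linear_combination -(mul_left_cancel₀ (pow_ne_zero k hp0) hWU)

/-- Multiplication by `p ^ k` identifies `ℤ/p` with the kernel of `ℤ/p^(k+1) → ℤ/p^k`. -/
def powMulCast (p k : ℕ) (t : ZMod p) : ZMod (p ^ (k + 1)) :=
  (((p : ℤ) ^ k * t.val : ℤ) : ZMod (p ^ (k + 1)))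

section

variable {p : ℕ} (k : ℕ)

theorem intCast_pow_mul_eq_intCast_pow_mul_iff (hp : p ≠ 0) (x y : ℤ) :
    (((p : ℤ) ^ k * x : ℤ) : ZMod (p ^ (k + 1))) =
        (((p : ℤ) ^ k * y : ℤ) : ZMod (p ^ (k + 1))) ↔ (x : ZMod p) = y := by
  rw [ZMod.intCast_eq_intCast_iff_dvd_sub, ZMod.intCast_eq_intCast_iff_dvd_sub, Nat.cast_pow,
    pow_succ, ← mul_sub, mul_dvd_mul_iff_left (pow_ne_zero _ (by exact_mod_cast hp))]

theorem powMulCast_injective [NeZero p] : Function.Injective (powMulCast p k) := fun t t' h ↦ by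
  simpa using (intCast_pow_mul_eq_intCast_pow_mul_iff k (NeZero.ne p) _ _).mp h

theorem castHom_eq_zero_iff_exists_powMulCast [NeZero p] (a : ZMod (p ^ (k + 1))) :
    ZMod.castHom (pow_dvd_pow p k.le_succ) (ZMod (p ^ k)) a = 0 ↔
      ∃ t, powMulCast p k t = a := by
  constructor
  · intro ha
    rw [← ZMod.intCast_zmod_cast a, map_intCast, ZMod.intCast_zmod_eq_zero_iff_dvd,
      Nat.cast_pow] at ha
    obtain ⟨m, hm⟩ := ha
    refine ⟨m, ?_⟩
    rw [← ZMod.intCast_zmod_cast a, hm, powMulCast,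
      intCast_pow_mul_eq_intCast_pow_mul_iff k (NeZero.ne p)]
    simp
  · rintro ⟨t, rfl⟩
    rw [powMulCast, map_intCast, ZMod.intCast_zmod_eq_zero_iff_dvd, Nat.cast_pow]
    exact dvd_mul_right _ _

theorem isSquare_powMulCast_iff [Fact p.Prime] (t : ZMod p) :
    IsSquare (powMulCast p k t) ↔ t = 0 ∨ Even k ∧ IsSquare t := by
  constructor
  · intro h
    by_cases ht : t = 0
    · exact Or.inl ht
    have hT : ¬ (p : ℤ) ∣ t.val := by
      rwa [← ZMod.intCast_zmod_eq_zero_iff_dvd, Int.cast_natCast, ZMod.natCast_zmod_val]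
    obtain ⟨S, hS⟩ := (ZMod.isSquare_intCast_iff _ _).mp h
    push_cast at hS
    obtain ⟨hk, W, hW⟩ := Int.even_and_exists_sq_of_pow_succ_dvd hT hS
    refine Or.inr ⟨hk, W, ?_⟩
    have hWt := (ZMod.intCast_eq_intCast_iff_dvd_sub (W ^ 2) t.val p).mpr hW
    push_cast at hWt
    rw [← ZMod.natCast_zmod_val t, ← hWt, sq]
  · rintro (rfl | ⟨⟨j, rfl⟩, r, rfl⟩)
    · simp [powMulCast]
    · refine ⟨(((p : ℤ) ^ j * r.val : ℤ) : ZMod (p ^ (j + j + 1))), ?_⟩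
      rw [← Int.cast_mul, show ((p : ℤ) ^ j * r.val) * ((p : ℤ) ^ j * r.val)
        = (p : ℤ) ^ (j + j) * (r.val * r.val) by ring, powMulCast,
        intCast_pow_mul_eq_intCast_pow_mul_iff _ (NeZero.ne p)]
      simp

theorem isSquare_intCast_add_powMulCast [Fact p.Prime] (hodd : p ≠ 2) (hk : k ≠ 0) {n : ℤ}
    (hn : ¬ (p : ℤ) ∣ n) (hsq : IsSquare (n : ZMod (p ^ k))) (t : ZMod p) :
    IsSquare ((n : ZMod (p ^ (k + 1))) + powMulCast p k t) := by
  have hN : ¬ (p : ℤ) ∣ n + (p : ℤ) ^ k * t.val :=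
    (dvd_add_left ((dvd_pow_self _ hk).mul_right _)).not.mpr hn
  have hNsq : IsSquare ((n + (p : ℤ) ^ k * t.val : ℤ) : ZMod (p ^ k)) := by
    rwa [Int.cast_add, Int.cast_mul, Int.cast_pow, Int.cast_natCast, ← Nat.cast_pow,
      ZMod.natCast_self, zero_mul, add_zero]
  have h := ZMod.isSquare_intCast_pow_succ_of_isSquare Fact.out hodd hk hN hNsq
  rwa [Int.cast_add] at h

theorem setOf_isTarget_lift_eq_image [Fact p.Prime] (hodd : p ≠ 2) (hk : k ≠ 0) {n : ℤ}
    (hn : ¬ (p : ℤ) ∣ n) {b : ZMod (p ^ k)} (hb : IsTarget n (p ^ k) 0 b) :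
    {q : ZMod (p ^ (k + 1)) × ZMod (p ^ (k + 1)) |
        IsTarget n (p ^ (k + 1)) q.1 q.2 ∧
        ZMod.castHom (pow_dvd_pow p k.le_succ) (ZMod (p ^ k)) q.1 = 0 ∧
        ZMod.castHom (pow_dvd_pow p k.le_succ) (ZMod (p ^ k)) q.2 = b} =
      (fun t ↦ (powMulCast p k t, n + powMulCast p k t)) ''
        {t | t = 0 ∨ Even k ∧ IsSquare t} := by
  obtain ⟨-, hsq, rfl⟩ := hb
  rw [add_zero] at hsq ⊢
  ext ⟨a, c⟩
  simp only [IsTarget, Set.mem_ofPred_eq, Set.mem_image, Prod.mk.injEq]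
  constructor
  · rintro ⟨⟨ha, -, rfl⟩, ha0, -⟩
    obtain ⟨t, rfl⟩ := (castHom_eq_zero_iff_exists_powMulCast k a).mp ha0
    exact ⟨t, (isSquare_powMulCast_iff k t).mp ha, rfl, rfl⟩
  · rintro ⟨t, ht, rfl, rfl⟩
    have ht0 := (castHom_eq_zero_iff_exists_powMulCast k _).mpr ⟨t, rfl⟩
    refine ⟨⟨(isSquare_powMulCast_iff k t).mpr ht,
      isSquare_intCast_add_powMulCast k hodd hk hn hsq t, rfl⟩, ht0, ?_⟩
    rw [map_add, ht0, add_zero, map_intCast]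

end

theorem stmt_10 (p : ℕ) [Fact p.Prime] (hodd : p ≠ 2) (n : ℤ)
    (hn : Int.gcd n p = 1) (k : ℕ) (hk : 1 ≤ k)
    (b : ZMod (p ^ k)) (hb : IsTarget n (p ^ k) 0 b) :
    (Even k →
      ({q : ZMod (p ^ (k + 1)) × ZMod (p ^ (k + 1)) |
          IsTarget n (p ^ (k + 1)) q.1 q.2 ∧
          ZMod.castHom (pow_dvd_pow p k.le_succ) (ZMod (p ^ k)) q.1 = 0 ∧
          ZMod.castHom (pow_dvd_pow p k.le_succ) (ZMod (p ^ k)) q.2 = b}).ncard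
        = (p + 1) / 2) ∧
    (Odd k →
      ({q : ZMod (p ^ (k + 1)) × ZMod (p ^ (k + 1)) |
          IsTarget n (p ^ (k + 1)) q.1 q.2 ∧
          ZMod.castHom (pow_dvd_pow p k.le_succ) (ZMod (p ^ k)) q.1 = 0 ∧
          ZMod.castHom (pow_dvd_pow p k.le_succ) (ZMod (p ^ k)) q.2 = b}).ncard
        = 1) := by
  have hpn : ¬ (p : ℤ) ∣ n := by
    rw [← (Nat.prime_iff_prime_int.mp Fact.out).coprime_iff_not_dvd]
    exact (Int.isCoprime_iff_gcd_eq_one.mpr hn).symm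
  rw [setOf_isTarget_lift_eq_image k hodd (by omega) hpn hb,
    Set.ncard_image_of_injective _ fun t t' h ↦ powMulCast_injective k (congrArg Prod.fst h)]
  refine ⟨fun hk ↦ ?_, fun hk ↦ ?_⟩
  · have hT : {t : ZMod p | t = 0 ∨ Even k ∧ IsSquare t} = {t | IsSquare t} := by
      ext t
      simpa [hk] using fun h : t = 0 ↦ h ▸ IsSquare.zero
    rw [hT, FiniteField.ncard_isSquare (by rwa [ZMod.ringChar_zmod_n]), ZMod.card]
  · have hT : {t : ZMod p | t = 0 ∨ Even k ∧ IsSquare t} = {0} := by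
      simp [Nat.not_even_iff_odd.mpr hk]
    rw [hT, Set.ncard_singleton]
end

section
/- Let p be an odd prime and n an integer with gcd(n,p)=1. Let R̄₁ = {(x,y) ∈ H_{n,p} : y ≤ min(x, p−x)} and let T(n,p) be the set of targets for n modulus p. Then the map γ₁ : R̄₁ → T(n,p) defined by γ₁(x,y) = (4⁻¹·(x−y)², 4⁻¹·(x+y)²), where the expressions are computed in ℤ/pℤ and 4⁻¹ is the inverse of 4 in ℤ/pℤ, is a bijection. -/
section SignSwap

variable {R : Type*} [CommRing R]

def signSwapOrbit (Q : R × R) : Set (R × R) :=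
  {Q, Q.swap, -Q.swap, -Q}

theorem mul_eq_of_mem_signSwapOrbit {Q Q' : R × R} (h : Q' ∈ signSwapOrbit Q) :
    Q'.1 * Q'.2 = Q.1 * Q.2 := by
  rcases h with rfl | rfl | rfl | rfl <;> simp [mul_comm]

end SignSwap

section Field

variable {F : Type*} [Field F]

def quarterSquares (Q : F × F) : F × F :=
  (4⁻¹ * (Q.1 - Q.2) ^ 2, 4⁻¹ * (Q.1 + Q.2) ^ 2)

theorem isSquare_inv_four_mul_sq (z : F) : IsSquare (4⁻¹ * z ^ 2) :=
  ⟨2⁻¹ * z, by rw [← sq, mul_pow, inv_pow]; norm_num⟩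

theorem four_ne_zero_of_two_ne_zero (h2 : (2 : F) ≠ 0) : (4 : F) ≠ 0 := by
  simpa [show (4 : F) = 2 * 2 by norm_num] using h2

theorem mul_add_quarterSquares_fst (h2 : (2 : F) ≠ 0) (Q : F × F) :
    Q.1 * Q.2 + (quarterSquares Q).1 = (quarterSquares Q).2 := by
  have h4 := four_ne_zero_of_two_ne_zero h2
  simp only [quarterSquares]
  field_simp
  ring

theorem exists_quarterSquares_eq (h2 : (2 : F) ≠ 0) {N a b : F} (ha : IsSquare a)
    (hb : IsSquare b) (hab : N + a = b) : ∃ Q : F × F, Q.1 * Q.2 = N ∧ quarterSquares Q = (a, b) := by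
  obtain ⟨s, rfl⟩ := ha
  obtain ⟨t, rfl⟩ := hb
  have h4 := four_ne_zero_of_two_ne_zero h2
  refine ⟨(t + s, t - s), by linear_combination -hab, ?_⟩
  simp only [quarterSquares, Prod.mk.injEq]
  constructor <;> field_simp <;> ring

theorem eq_and_eq_of_sub_eq_of_add_eq (h2 : (2 : F) ≠ 0) {X Y U V : F} (hsub : X - Y = U - V)
    (hadd : X + Y = U + V) : X = U ∧ Y = V :=
  ⟨mul_left_cancel₀ h2 (by linear_combination hsub + hadd),
    mul_left_cancel₀ h2 (by linear_combination hadd - hsub)⟩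

theorem quarterSquares_eq_quarterSquares_iff (h2 : (2 : F) ≠ 0) {Q Q' : F × F} :
    quarterSquares Q' = quarterSquares Q ↔ Q' ∈ signSwapOrbit Q := by
  obtain ⟨X, Y⟩ := Q
  obtain ⟨X', Y'⟩ := Q'
  have h4 := four_ne_zero_of_two_ne_zero h2
  simp only [quarterSquares, signSwapOrbit, mul_right_inj' (inv_ne_zero h4),
    sq_eq_sq_iff_eq_or_eq_neg, Set.mem_insert_iff, Set.mem_singleton_iff, Prod.ext_iff,
    Prod.swap_prod_mk, Prod.fst_neg, Prod.snd_neg]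
  constructor
  · rintro ⟨hsub | hsub, hadd | hadd⟩
    · exact Or.inl (eq_and_eq_of_sub_eq_of_add_eq h2 hsub hadd)
    · exact Or.inr <| Or.inr <| Or.inl <| eq_and_eq_of_sub_eq_of_add_eq h2
        (by linear_combination hsub) (by linear_combination hadd)
    · exact Or.inr <| Or.inl <| eq_and_eq_of_sub_eq_of_add_eq h2
        (by linear_combination hsub) (by linear_combination hadd)
    · exact Or.inr <| Or.inr <| Or.inr <| eq_and_eq_of_sub_eq_of_add_eq h2
        (by linear_combination hsub) (by linear_combination hadd)
  · rintro (⟨rfl, rfl⟩ | ⟨rfl, rfl⟩ | ⟨rfl, rfl⟩ | ⟨rfl, rfl⟩)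
    · exact ⟨Or.inl rfl, Or.inl rfl⟩
    · exact ⟨Or.inr (by ring), Or.inl (by ring)⟩
    · exact ⟨Or.inl (by ring), Or.inr (by ring)⟩
    · exact ⟨Or.inr (by ring), Or.inr (by ring)⟩

end Field

theorem ZMod.intCast_injOn_Ico (p : ℕ) : Set.InjOn (Int.cast : ℤ → ZMod p) (Set.Ico 0 p) := by
  intro a ⟨ha, ha'⟩ b ⟨hb, hb'⟩ h
  have := (ZMod.intCast_eq_intCast_iff' a b p).mp h
  rwa [Int.emod_eq_of_lt ha ha', Int.emod_eq_of_lt hb hb'] at this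

theorem ZMod.intCast_ne_zero_of_gcd_eq_one {n : ℤ} {c : ℕ} (hc : c ≠ 1) (hn : Int.gcd n c = 1) :
    (n : ZMod c) ≠ 0 := by
  rw [Ne, ZMod.intCast_zmod_eq_zero_iff_dvd]
  intro h
  exact hc (Nat.dvd_one.mp (hn ▸ Int.dvd_gcd h dvd_rfl))

theorem mem_Hyp_iff {n : ℤ} {c : ℕ} {q : ℤ × ℤ} :
    q ∈ Hyp n c ↔ 0 ≤ q.1 ∧ q.1 < c ∧ 0 ≤ q.2 ∧ q.2 < c ∧ (q.1 : ZMod c) * q.2 = n := by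
  rw [← Int.cast_mul, ZMod.intCast_eq_intCast_iff_dvd_sub, dvd_sub_comm]
  rfl

theorem snd_pos_of_mem_Hyp {n : ℤ} {c : ℕ} (hn : (n : ZMod c) ≠ 0) {q : ℤ × ℤ} (hq : q ∈ Hyp n c) :
    0 < q.2 := by
  obtain ⟨-, -, hq2, -, hxy⟩ := mem_Hyp_iff.mp hq
  refine lt_of_le_of_ne hq2 fun h => hn ?_
  rw [← hxy, ← h, Int.cast_zero, mul_zero]

section Representatives

variable {p : ℕ}

theorem eq_of_intCast_mem_signSwapOrbit {q q' : ℤ × ℤ} (hq : 0 < q.2 ∧ q.2 ≤ min q.1 (p - q.1))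
    (hq' : 0 < q'.2 ∧ q'.2 ≤ min q'.1 (p - q'.1))
    (h : ((q'.1 : ZMod p), (q'.2 : ZMod p)) ∈ signSwapOrbit ((q.1 : ZMod p), (q.2 : ZMod p))) :
    q' = q := by
  obtain ⟨x, y⟩ := q
  obtain ⟨x', y'⟩ := q'
  have hneg : ∀ z : ℤ, -(z : ZMod p) = ((p - z : ℤ) : ZMod p) := by simp
  have hinj := ZMod.intCast_injOn_Ico p
  simp only [signSwapOrbit, Set.mem_insert_iff, Set.mem_singleton_iff, Prod.ext_iff,
    Prod.swap_prod_mk, Prod.fst_neg, Prod.snd_neg, hneg] at h ⊢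
  rcases h with ⟨h1, h2⟩ | ⟨h1, h2⟩ | ⟨h1, h2⟩ | ⟨h1, h2⟩
  all_goals
    have e1 := hinj ⟨by omega, by omega⟩ ⟨by omega, by omega⟩ h1
    have e2 := hinj ⟨by omega, by omega⟩ ⟨by omega, by omega⟩ h2
    omega

theorem exists_intCast_mem_signSwapOrbit [NeZero p] {X Y : ZMod p} (h1 : X ≠ 0) (h2 : Y ≠ 0) :
    ∃ q : ℤ × ℤ, (0 < q.2 ∧ q.2 ≤ min q.1 (p - q.1)) ∧
      ((q.1 : ZMod p), (q.2 : ZMod p)) ∈ signSwapOrbit (X, Y) := by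
  have hX : ((X.val : ℤ) : ZMod p) = X := by simp
  have hY : ((Y.val : ℤ) : ZMod p) = Y := by simp
  have hX0 := ZMod.val_pos.mpr h1
  have hY0 := ZMod.val_pos.mpr h2
  have hXp := X.val_lt
  have hYp := Y.val_lt
  simp only [signSwapOrbit, Set.mem_insert_iff, Set.mem_singleton_iff, Prod.ext_iff,
    Prod.swap_prod_mk, Prod.fst_neg, Prod.snd_neg]
  rcases le_or_gt Y.val X.val with hle | hlt <;> rcases le_or_gt (X.val + Y.val) p with hs | hs
  · exact ⟨(X.val, Y.val), by omega, Or.inl ⟨hX, hY⟩⟩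
  · refine ⟨(p - Y.val, p - X.val), by omega, Or.inr (Or.inr (Or.inl ⟨?_, ?_⟩))⟩ <;> simp
  · exact ⟨(Y.val, X.val), by omega, Or.inr (Or.inl ⟨hY, hX⟩)⟩
  · refine ⟨(p - X.val, p - Y.val), by omega, Or.inr (Or.inr (Or.inr ⟨?_, ?_⟩))⟩ <;> simp

end Representatives

theorem stmt_14 (p : ℕ) [Fact p.Prime] (hodd : p ≠ 2) (n : ℤ)
    (hn : Int.gcd n p = 1) :
    Set.BijOn
      (fun q : ℤ × ℤ =>
        ((4 : ZMod p)⁻¹ * ((q.1 : ZMod p) - (q.2 : ZMod p)) ^ 2,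
         (4 : ZMod p)⁻¹ * ((q.1 : ZMod p) + (q.2 : ZMod p)) ^ 2))
      {q ∈ Hyp n p | q.2 ≤ min q.1 ((p : ℤ) - q.1)}
      {ab : ZMod p × ZMod p | IsTarget n p ab.1 ab.2} := by
  have h2 : (2 : ZMod p) ≠ 0 := Ring.two_ne_zero (by rwa [ZMod.ringChar_zmod_n])
  have hn0 : (n : ZMod p) ≠ 0 :=
    ZMod.intCast_ne_zero_of_gcd_eq_one (Fact.out : p.Prime).one_lt.ne' hn
  refine ⟨?mapsTo, ?injOn, ?surjOn⟩
  case mapsTo =>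
    rintro q ⟨hq, -⟩
    obtain ⟨-, -, -, -, hxy⟩ := mem_Hyp_iff.mp hq
    exact ⟨isSquare_inv_four_mul_sq _, isSquare_inv_four_mul_sq _,
      hxy ▸ mul_add_quarterSquares_fst h2 ((q.1 : ZMod p), (q.2 : ZMod p))⟩
  case injOn =>
    rintro q ⟨hq, hqD⟩ q' ⟨hq', hq'D⟩ heq
    exact eq_of_intCast_mem_signSwapOrbit ⟨snd_pos_of_mem_Hyp hn0 hq', hq'D⟩
      ⟨snd_pos_of_mem_Hyp hn0 hq, hqD⟩ ((quarterSquares_eq_quarterSquares_iff h2).mp heq)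
  case surjOn =>
    rintro ⟨a, b⟩ ⟨ha, hb, hab⟩
    obtain ⟨Q, hQ, hQab⟩ := exists_quarterSquares_eq h2 ha hb hab
    obtain ⟨q, ⟨hq2, hqmin⟩, hqQ⟩ := exists_intCast_mem_signSwapOrbit
      (left_ne_zero_of_mul (hQ ▸ hn0)) (right_ne_zero_of_mul (hQ ▸ hn0))
    refine ⟨q, ⟨mem_Hyp_iff.mpr ⟨by omega, by omega, hq2.le, by omega,
      (mul_eq_of_mem_signSwapOrbit hqQ).trans hQ⟩, hqmin⟩,
      ((quarterSquares_eq_quarterSquares_iff h2).mpr hqQ).trans hQab⟩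
end

section
/- Let p be an odd prime and n an integer with p ∤ n. If p ≡ 3 (mod 4), or if p ≡ 1 (mod 4) and the Legendre symbol (n/p) = −1, then τ(n,p) ≤ (p+1)/4. -/
open Finset

theorem isSquare_neg_one_of_isSquare_of_isSquare_neg {F : Type*} [Field F] {n : F} (hn : n ≠ 0)
    (hsq : IsSquare n) (hsq_neg : IsSquare (-n)) : IsSquare (-1 : F) := by
  simpa [hn] using hsq_neg.div hsq

section FiniteField

variable {F : Type*} [Field F] [Fintype F] [DecidableEq F]

def targets (n : F) : Finset (F × F) :=
  {t | IsSquare t.1 ∧ IsSquare t.2 ∧ n + t.1 = t.2}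

theorem card_filter_sq_sub_sq_eq {n : F} (h2 : (2 : F) ≠ 0) (hn : n ≠ 0) :
    #{xy : F × F | xy.2 ^ 2 - xy.1 ^ 2 = n} = Fintype.card F - 1 := by
  rw [← card_univ, ← card_erase_of_mem (mem_univ (0 : F))]
  -- `y ^ 2 - x ^ 2 = (y - x) (y + x)`, so a solution is determined by `u = y - x ≠ 0`.
  refine card_nbij' (fun xy => xy.2 - xy.1) (fun u => ((n / u - u) / 2, (n / u + u) / 2))
    ?_ ?_ ?_ ?_
  · rintro ⟨x, y⟩ hxy
    simp only [mem_coe, mem_filter, mem_erase, mem_univ, true_and, and_true] at hxy ⊢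
    intro h
    exact hn (by rw [← hxy]; linear_combination (y + x) * h)
  · intro u hu
    simp only [mem_coe, mem_filter, mem_erase, mem_univ, true_and, and_true] at hu ⊢
    field_simp
    ring
  · rintro ⟨x, y⟩ hxy
    simp only [mem_coe, mem_filter, mem_univ, true_and] at hxy
    have hu : y - x ≠ 0 := fun h => hn (by rw [← hxy]; linear_combination (y + x) * h)
    have hdiv : n / (y - x) = y + x := by
      rw [div_eq_iff hu, ← hxy]; ring
    simp only [hdiv, Prod.mk.injEq]
    constructor <;> field_simp <;> ring
  · intro u hu
    simp only [mem_coe, mem_erase, mem_univ, and_true] at hu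
    field_simp
    ring

theorem card_filter_sq_eq_of_isSquare {a : F} (h2 : (2 : F) ≠ 0) (ha : IsSquare a) :
    #{x : F | x ^ 2 = a} = if a = 0 then 1 else 2 := by
  obtain ⟨r, rfl⟩ := ha
  have hroots : ({x : F | x ^ 2 = r * r} : Finset F) = {r, -r} := by
    ext x
    simp [← sq, sq_eq_sq_iff_eq_or_eq_neg]
  rw [hroots]
  by_cases hr : r = 0
  · simp [hr]
  · have hne : r ≠ -r := fun h => hr <| (mul_eq_zero.mp (by linear_combination h)).resolve_left h2
    simp [hr, hne]

theorem card_filter_targets_of_eq_zero_le_one {n : F} (hsq : ¬(IsSquare n ∧ IsSquare (-n))) :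
    #{t ∈ targets n | t.1 = 0 ∨ t.2 = 0} ≤ 1 := by
  rw [card_le_one_iff_subset_singleton]
  by_cases hn : IsSquare n
  · refine ⟨(0, n), fun t ht => ?_⟩
    simp only [targets, mem_filter, mem_univ, true_and] at ht
    obtain ⟨⟨hsq₁, -, hsum⟩, h₁ | h₂⟩ := ht
    · simp [Prod.ext_iff, h₁, ← hsum]
    · exact absurd ⟨hn, by rwa [add_eq_zero_iff_neg_eq.mp (hsum.trans h₂)]⟩ hsq
  · refine ⟨(-n, 0), fun t ht => ?_⟩
    simp only [targets, mem_filter, mem_univ, true_and] at ht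
    obtain ⟨⟨-, hsq₂, hsum⟩, h₁ | h₂⟩ := ht
    · exact absurd (by rwa [← hsum, h₁, add_zero] at hsq₂) hn
    · simp [Prod.ext_iff, h₂, ← add_eq_zero_iff_neg_eq.mp (hsum.trans h₂)]

theorem four_mul_card_targets_le {n : F} (h2 : (2 : F) ≠ 0) (hn : n ≠ 0)
    (hsq : ¬(IsSquare n ∧ IsSquare (-n))) :
    4 * #(targets n) ≤ Fintype.card F + 1 := by
  set r : F → ℕ := fun a => #{x : F | x ^ 2 = a}
  -- Squaring both coordinates maps the solutions of `y ^ 2 - x ^ 2 = n` onto the targets;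
  -- the fibre over `(a, b)` is `{x | x ^ 2 = a} ×ˢ {y | y ^ 2 = b}`.
  have hfibres : ∑ t ∈ targets n, r t.1 * r t.2 = Fintype.card F - 1 := by
    rw [← card_filter_sq_sub_sq_eq h2 hn,
      card_eq_sum_card_fiberwise (f := fun xy : F × F => (xy.1 ^ 2, xy.2 ^ 2))]
    · refine sum_congr rfl fun t ht => ?_
      simp only [targets, mem_filter, mem_univ, true_and] at ht
      rw [← card_product]
      congr 1
      ext ⟨x, y⟩
      simp only [mem_filter, mem_univ, true_and, mem_product, Prod.ext_iff]
      constructor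
      · rintro ⟨hx, hy⟩
        exact ⟨by rw [hx, hy, ← ht.2.2]; ring, hx, hy⟩
      · exact And.right
    · rintro ⟨x, y⟩ hxy
      simp only [mem_coe, mem_filter, mem_univ, true_and, targets] at hxy ⊢
      exact ⟨.sq x, .sq y, by rw [← hxy]; ring⟩
  have hbound : ∀ t ∈ targets n, 4 ≤ r t.1 * r t.2 + 2 * if t.1 = 0 ∨ t.2 = 0 then 1 else 0 := by
    intro t ht
    simp only [targets, mem_filter, mem_univ, true_and] at ht
    obtain ⟨hsq₁, hsq₂, hsum⟩ := ht
    have hne : ¬(t.1 = 0 ∧ t.2 = 0) := fun h => hn (by simpa [h.1, h.2] using hsum)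
    simp only [r, card_filter_sq_eq_of_isSquare h2 hsq₁, card_filter_sq_eq_of_isSquare h2 hsq₂]
    split_ifs <;> simp_all
  have hdeg := card_filter_targets_of_eq_zero_le_one hsq
  have hcard := Fintype.card_pos (α := F)
  calc 4 * #(targets n) = ∑ _t ∈ targets n, 4 := by rw [sum_const, smul_eq_mul, mul_comm]
    _ ≤ ∑ t ∈ targets n, (r t.1 * r t.2 + 2 * if t.1 = 0 ∨ t.2 = 0 then 1 else 0) :=
      sum_le_sum hbound
    _ = Fintype.card F - 1 + 2 * #{t ∈ targets n | t.1 = 0 ∨ t.2 = 0} := by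
      rw [sum_add_distrib, ← mul_sum, hfibres, card_filter]
    _ ≤ Fintype.card F + 1 := by omega

end FiniteField

theorem stmt_15 (p : ℕ) [Fact p.Prime] (hodd : p ≠ 2) (n : ℤ)
    (hn : ¬ (p : ℤ) ∣ n)
    (h : p % 4 = 3 ∨ (p % 4 = 1 ∧ legendreSym p n = -1)) :
    (tau n p : ℤ) ≤ ((p : ℤ) + 1) / 4 := by
  have h2 : (2 : ZMod p) ≠ 0 := Ring.two_ne_zero (by rwa [ZMod.ringChar_zmod_n])
  have hn0 : (n : ZMod p) ≠ 0 := (ZMod.intCast_zmod_eq_zero_iff_dvd n p).not.mpr hn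
  have hsq : ¬(IsSquare (n : ZMod p) ∧ IsSquare (-(n : ZMod p))) := by
    rintro ⟨hsq, hsq_neg⟩
    rcases h with h3 | ⟨-, hleg⟩
    · exact ZMod.exists_sq_eq_neg_one_iff.mp
        (isSquare_neg_one_of_isSquare_of_isSquare_neg hn0 hsq hsq_neg) h3
    · exact (legendreSym.eq_neg_one_iff p).mp hleg hsq
  have htau : tau n p = #(targets (n : ZMod p)) := by
    rw [tau, ← Set.ncard_coe_finset]
    congr
    ext
    simp [targets, IsTarget]
  have hcount := four_mul_card_targets_le h2 hn0 hsq
  rw [ZMod.card] at hcount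
  omega
end

section
/- There exists a constant C > 0 such that for every real B ≥ 3 and every integer n the following holds: let c be the product of all odd primes p ≤ B, and suppose gcd(n,c) = 1 and that for every prime p ≤ B with p ≡ 1 (mod 4) the Legendre symbol (n/p) = −1. Then τ(n,c)/c ≤ C · 4^{−π(B)} · log B, where π(B) is the number of primes ≤ B. -/
/-!
By the Chinese remainder theorem `τ(n, ·)` is multiplicative on coprime moduli. At an odd prime
`p ∤ n`, write the indicator of the squares as `(1 + χ + δ₀) / 2`, with `χ` the quadratic
character and `δ₀` the indicator of `0`; expanding and evaluating the Jacobi sum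
`∑ₐ χ(a) χ(n + a) = -1` gives `4 τ(n,p) = p + 1 + χ(n) + χ(-n)`, which is at most `p + 1`
because either `χ(n) = -1` (for `p ≡ 1 mod 4`) or `χ(-1) = -1` (for `p ≡ 3 mod 4`). Hence
`τ(n,c)/c ≤ 4^{1 - π(B)} ∏_{p ≤ B} (1 + 1/p)`, and the product is `O(log B)` by an elementary
Mertens estimate: Legendre's formula for `log N!` gives `∑_{p ≤ N} log p / p ≤ log N + 2`, and
partial summation turns this into `∑_{p ≤ N} 1/p ≤ log log N + 5`.
-/

open Finset

theorem Prod.isSquare_iff_s17 {M N : Type*} [Mul M] [Mul N] {z : M × N} :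
    IsSquare z ↔ IsSquare z.1 ∧ IsSquare z.2 :=
  ⟨fun ⟨r, hr⟩ => ⟨⟨r.1, congrArg Prod.fst hr⟩, ⟨r.2, congrArg Prod.snd hr⟩⟩,
    fun ⟨⟨x, hx⟩, ⟨y, hy⟩⟩ => ⟨(x, y), Prod.ext hx hy⟩⟩

theorem MulEquiv.isSquare_apply_iff_s17 {M N : Type*} [Monoid M] [Monoid N] (e : M ≃* N) {a : M} :
    IsSquare (e a) ↔ IsSquare a :=
  ⟨fun h => by simpa using h.map e.symm, IsSquare.map e⟩

noncomputable def sqDiffCount (R : Type*) [Add R] [Mul R] (m : R) : ℕ :=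
  Nat.card {a : R // IsSquare a ∧ IsSquare (m + a)}

theorem tau_eq_sqDiffCount (n : ℤ) (c : ℕ) : tau n c = sqDiffCount (ZMod c) n := by
  rw [tau, ← Nat.card_coe_set_eq, sqDiffCount]
  refine Nat.card_congr
    { toFun := fun t => ⟨t.1.1, t.2.1, t.2.2.2 ▸ t.2.2.1⟩
      invFun := fun a => ⟨(a.1, n + a.1), a.2.1, a.2.2, rfl⟩
      left_inv := ?_
      right_inv := fun _ => rfl }
  rintro ⟨⟨a, b⟩, -, -, rfl : (n : ZMod c) + a = b⟩
  rfl

theorem sqDiffCount_congr {R S : Type*} [Ring R] [Ring S] (e : R ≃+* S) (m : R) :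
    sqDiffCount S (e m) = sqDiffCount R m := by
  refine (Nat.card_congr (e.toEquiv.subtypeEquiv fun a => ?_)).symm
  rw [RingEquiv.toEquiv_eq_coe, EquivLike.coe_coe, ← map_add]
  exact (and_congr (e.toMulEquiv.isSquare_apply_iff_s17) (e.toMulEquiv.isSquare_apply_iff_s17)).symm

theorem sqDiffCount_prod {R S : Type*} [Add R] [Mul R] [Add S] [Mul S] (m : R) (m' : S) :
    sqDiffCount (R × S) (m, m') = sqDiffCount R m * sqDiffCount S m' := by
  rw [sqDiffCount, sqDiffCount, sqDiffCount, ← Nat.card_prod]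
  refine Nat.card_congr ((Equiv.subtypeEquivRight fun z => ?_).trans Equiv.subtypeProdEquivProd)
  simp only [Prod.isSquare_iff_s17, Prod.fst_add, Prod.snd_add]
  tauto

theorem tau_mul (n : ℤ) {m k : ℕ} (h : m.Coprime k) : tau n (m * k) = tau n m * tau n k := by
  rw [tau_eq_sqDiffCount, tau_eq_sqDiffCount, tau_eq_sqDiffCount,
    ← sqDiffCount_congr (ZMod.chineseRemainder h), map_intCast]
  exact sqDiffCount_prod (n : ZMod m) (n : ZMod k)

theorem tau_one (n : ℤ) : tau n 1 = 1 := by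
  rw [tau_eq_sqDiffCount, sqDiffCount, Nat.card_eq_one_iff_unique]
  exact ⟨inferInstance, ⟨⟨0, ⟨0, Subsingleton.elim _ _⟩, ⟨0, Subsingleton.elim _ _⟩⟩⟩⟩

theorem tau_prod_primes (n : ℤ) {s : Finset ℕ} (hs : ∀ p ∈ s, p.Prime) :
    tau n (∏ p ∈ s, p) = ∏ p ∈ s, tau n p := by
  induction s using Finset.induction_on with
  | empty => exact tau_one n
  | insert q s hq ih =>
    have hcop : q.Coprime (∏ p ∈ s, p) := Nat.Coprime.prod_right fun p hp =>
      (Nat.coprime_primes (hs q (mem_insert_self q s)) (hs p (mem_insert_of_mem hp))).mpr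
        (ne_of_mem_of_not_mem hp hq).symm
    rw [prod_insert hq, prod_insert hq, tau_mul n hcop,
      ih fun p hp => hs p (mem_insert_of_mem hp)]

section FiniteField

variable {F : Type*} [Field F] [Fintype F] [DecidableEq F]

theorem sum_quadraticChar_mul_quadraticChar_add (hF : ringChar F ≠ 2) {m : F} (hm : m ≠ 0) :
    ∑ a : F, quadraticChar F a * quadraticChar F (m + a) = -1 := by
  set χ := quadraticChar F
  have hJ : jacobiSum χ χ = -χ (-1) := by
    simpa only [(quadraticChar_isQuadratic F).inv] using
      jacobiSum_nontrivial_inv (quadraticChar_ne_one hF)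
  calc ∑ a : F, χ a * χ (m + a)
      = ∑ x : F, χ (-m * x) * χ (m + -m * x) :=
        (Fintype.sum_equiv (Equiv.mulLeft₀ (-m) (neg_ne_zero.mpr hm)) _ _ fun _ => rfl).symm
    _ = ∑ x : F, χ (-1) * (χ x * χ (1 - x)) := by
        refine sum_congr rfl fun x _ => ?_
        rw [show m + -m * x = m * (1 - x) by ring, show -m * x = -1 * m * x by ring]
        simp only [map_mul]
        linear_combination (χ (-1) * χ x * χ (1 - x)) * quadraticChar_sq_one hm
    _ = -1 := by
        rw [← mul_sum, ← jacobiSum, hJ, mul_neg, ← sq,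
          quadraticChar_sq_one (neg_ne_zero.mpr one_ne_zero)]

theorem ite_isSquare_eq_quadraticChar_add (b : F) :
    (if IsSquare b then 2 else 0 : ℤ) = quadraticChar F b + 1 + if b = 0 then 1 else 0 := by
  rcases eq_or_ne b 0 with rfl | hb
  · simp
  by_cases hsq : IsSquare b
  · simp [hsq, hb, (quadraticChar_one_iff_isSquare hb).mpr hsq]
  · simp [hsq, hb, quadraticChar_neg_one_iff_not_isSquare.mpr hsq]

theorem four_mul_sqDiffCount (hF : ringChar F ≠ 2) {m : F} (hm : m ≠ 0) :
    4 * (sqDiffCount F m : ℤ) =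
      Fintype.card F + 1 + quadraticChar F m + quadraticChar F (-m) := by
  classical
  have hcount : 4 * (sqDiffCount F m : ℤ) =
      ∑ a : F, (if IsSquare a then 2 else 0 : ℤ) * (if IsSquare (m + a) then 2 else 0) := by
    simp only [sqDiffCount, Nat.card_eq_fintype_card, Fintype.card_subtype, card_filter,
      Nat.cast_sum, mul_sum]
    refine sum_congr rfl fun a _ => ?_
    split_ifs <;> simp_all
  simp only [ite_isSquare_eq_quadraticChar_add] at hcount
  set χ := quadraticChar F
  have hsum : ∑ a : F, χ a = 0 := quadraticChar_sum_zero hF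
  have hshift : ∑ a : F, χ (m + a) = 0 := (Equiv.sum_comp (Equiv.addLeft m) χ).trans hsum
  have hJ : ∑ a : F, χ a * χ (m + a) = -1 := sum_quadraticChar_mul_quadraticChar_add hF hm
  have hsplit : ∀ a : F, (χ a + 1 + if a = 0 then 1 else 0) *
      (χ (m + a) + 1 + if m + a = 0 then 1 else 0) = χ a * χ (m + a) + χ a + χ (m + a) + 1 +
        ((if a = 0 then χ m + 1 else 0) + if m + a = 0 then χ a + 1 else 0) := by
    intro a
    split_ifs <;> simp_all [MulChar.map_zero] <;> ring
  simp only [hcount, hsplit, sum_add_distrib, hJ, hsum, hshift]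
  simp only [add_eq_zero_iff_eq_neg', sum_ite_eq', mem_univ, if_true, sum_const, card_univ,
    nsmul_eq_mul, mul_one]
  ring

end FiniteField

theorem four_mul_tau_prime_le {p : ℕ} [Fact p.Prime] (hp2 : p ≠ 2) {n : ℤ}
    (hn : (n : ZMod p) ≠ 0) (hleg : p % 4 = 1 → legendreSym p n = -1) :
    4 * tau n p ≤ p + 1 := by
  have hF : ringChar (ZMod p) ≠ 2 := by rwa [ZMod.ringChar_zmod_n]
  have hcount := four_mul_sqDiffCount hF hn
  have hneg : quadraticChar (ZMod p) (-(n : ZMod p)) = legendreSym p (-1) * legendreSym p n := by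
    rw [← legendreSym.mul]
    simp [legendreSym]
  rw [ZMod.card, hneg, legendreSym.at_neg_one hp2, ← tau_eq_sqDiffCount] at hcount
  change 4 * (tau n p : ℤ) = p + 1 + legendreSym p n + _ at hcount
  have hodd := (Fact.out : p.Prime).mod_two_eq_one_iff_ne_two.mpr hp2
  rcases Nat.odd_mod_four_iff.mp hodd with h | h
  · rw [ZMod.χ₄_nat_one_mod_four h, hleg h] at hcount
    omega
  · rw [ZMod.χ₄_nat_three_mod_four h] at hcount
    omega

open Real
open scoped Nat
open Nat (primesLE mem_primesLE)

theorem Real.log_factorial_eq_sum_primesLE (N : ℕ) :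
    log (N ! : ℕ) = ∑ p ∈ primesLE N, (N !).factorization p * log p := by
  rw [Real.log_nat_eq_sum_factorization]
  refine Finsupp.sum_of_support_subset _ (fun p hp => ?_) _ (by simp)
  have hp' := Nat.prime_of_mem_primeFactors hp
  exact mem_primesLE.mpr ⟨hp'.dvd_factorial.mp (Nat.dvd_of_mem_primeFactors hp), hp'⟩

theorem Nat.div_le_factorization_factorial {N p : ℕ} (hp : p.Prime) (hpN : p ≤ N) :
    N / p ≤ (N !).factorization p := by
  rw [Nat.factorization_factorial hp (Nat.lt_succ_self _)]
  have h1 : 1 ∈ Ico 1 (Nat.log p N + 1) := by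
    simpa using Nat.log_pos hp.one_lt hpN
  simpa using single_le_sum (f := fun i => N / p ^ i) (fun _ _ => Nat.zero_le _) h1

theorem sum_primesLE_div_mul_log_le (N : ℕ) :
    ∑ p ∈ primesLE N, ((N / p : ℕ) : ℝ) * log p ≤ N * log N := by
  calc ∑ p ∈ primesLE N, ((N / p : ℕ) : ℝ) * log p
      ≤ ∑ p ∈ primesLE N, (N !).factorization p * log p := by
        refine sum_le_sum fun p hp => ?_
        obtain ⟨hpN, hp⟩ := mem_primesLE.mp hp
        have := Nat.div_le_factorization_factorial hp hpN
        gcongr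
    _ = log (N ! : ℕ) := (Real.log_factorial_eq_sum_primesLE N).symm
    _ ≤ log ((N : ℝ) ^ N) := by
        gcongr
        exact_mod_cast N.factorial_le_pow
    _ = N * log N := log_pow N N

theorem sum_primesLE_log_div_le {N : ℕ} (hN : 1 ≤ N) :
    ∑ p ∈ primesLE N, log p / p ≤ log N + 2 := by
  have hN0 : (0 : ℝ) < N := by exact_mod_cast hN
  have hθ : ∑ p ∈ primesLE N, log p ≤ log 4 * N := by
    rw [← Chebyshev.theta_eq_sum_primesLE_log]
    exact Chebyshev.theta_le_log4_mul_x hN0.le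
  have hlog4 : log 4 ≤ 2 := by
    rw [show (4 : ℝ) = 2 ^ 2 by norm_num, log_pow]
    have := log_two_lt_d9
    push_cast
    linarith
  have hfloor : ∑ p ∈ primesLE N, ((N : ℝ) / p - 1) * log p ≤ N * log N := by
    refine le_trans (sum_le_sum fun p hp => ?_) (sum_primesLE_div_mul_log_le N)
    have := Nat.sub_one_lt_floor ((N : ℝ) / p)
    rw [Nat.floor_div_eq_div] at this
    gcongr
  have hexpand : ∑ p ∈ primesLE N, ((N : ℝ) / p - 1) * log p =
      N * ∑ p ∈ primesLE N, log p / p - ∑ p ∈ primesLE N, log p := by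
    rw [mul_sum, ← sum_sub_distrib]
    exact sum_congr rfl fun p _ => by ring
  rw [hexpand] at hfloor
  have : N * ∑ p ∈ primesLE N, log p / p ≤ N * (log N + 2) := by nlinarith
  exact le_of_mul_le_mul_left this hN0

theorem Real.mul_inv_sub_inv_le_log_sub_log {a L L' : ℝ} (hL : 0 < L) (hLL' : L ≤ L')
    (ha : a ≤ L) : a * (L⁻¹ - L'⁻¹) ≤ log L' - log L := by
  have hL' : 0 < L' := hL.trans_le hLL'
  have hd : 0 ≤ L⁻¹ - L'⁻¹ := sub_nonneg.mpr (inv_anti₀ hL hLL')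
  have hlog := one_sub_inv_le_log_of_pos (div_pos hL' hL)
  rw [log_div hL'.ne' hL.ne', inv_div] at hlog
  calc a * (L⁻¹ - L'⁻¹) ≤ L * (L⁻¹ - L'⁻¹) := mul_le_mul_of_nonneg_right ha hd
    _ = 1 - L / L' := by field_simp
    _ ≤ log L' - log L := hlog

theorem sum_primesLE_succ_sub {N : ℕ} (hN : 1 ≤ N) :
    ∑ p ∈ primesLE (N + 1), (p : ℝ)⁻¹ -
        (∑ p ∈ primesLE (N + 1), log p / p) / log (N + 1 : ℕ) =
      ∑ p ∈ primesLE N, (p : ℝ)⁻¹ - (∑ p ∈ primesLE N, log p / p) / log (N + 1 : ℕ) := by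
  rw [Nat.primesLE_succ]
  split_ifs
  · have hlog : log (N + 1 : ℕ) ≠ 0 := (log_pos (by norm_cast; omega)).ne'
    rw [sum_insert (Nat.notMem_primesLE N), sum_insert (Nat.notMem_primesLE N)]
    field_simp
    ring
  · rfl

theorem sum_primesLE_inv_le {N : ℕ} (hN : 2 ≤ N) :
    ∑ p ∈ primesLE N, (p : ℝ)⁻¹ ≤ log (log N) + 5 := by
  -- `V` is nonincreasing by partial summation: its increment is controlled by
  -- `mul_inv_sub_inv_le_log_sub_log` with `a = ∑_{p ≤ n} log p / p - 2 ≤ log n`.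
  let V : ℕ → ℝ := fun k => ∑ p ∈ primesLE k, (p : ℝ)⁻¹ -
    (∑ p ∈ primesLE k, log p / p) / log k - log (log k) + 2 / log k
  have hV2 : V 2 ≤ 4 := by
    have hlog2 := log_two_gt_d9
    have hlog_log2 := one_sub_inv_le_log_of_pos (show 0 < log 2 by linarith)
    have hinv : (log 2)⁻¹ ≤ 5 / 3 := by
      rw [inv_le_comm₀ (by linarith) (by norm_num)]
      linarith
    have hP2 : primesLE 2 = {2} := by decide
    have hhalf : log 2 / 2 / log 2 = 2⁻¹ := by field_simp
    simp only [V, hP2, sum_singleton, Nat.cast_ofNat, hhalf]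
    rw [div_eq_mul_inv]
    linarith
  have hstep : ∀ n, 2 ≤ n → V (n + 1) ≤ V n := by
    intro n hn
    have hL : 0 < log n := log_pos (by exact_mod_cast hn)
    have hLL' : log n ≤ log (n + 1 : ℕ) := log_le_log (by positivity) (by norm_cast; omega)
    have hA := sum_primesLE_log_div_le (show 1 ≤ n by omega)
    have hincr := mul_inv_sub_inv_le_log_sub_log hL hLL' (show _ - 2 ≤ log n by linarith)
    have hsucc := sum_primesLE_succ_sub (show 1 ≤ n by omega)
    simp only [V]
    linear_combination hincr + hsucc
  have hVN : V N ≤ V 2 := by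
    induction N, hN using Nat.le_induction with
    | base => exact le_rfl
    | succ n hn ih => exact (hstep n hn).trans ih
  have hL : 0 < log N := log_pos (by exact_mod_cast hN)
  have hA := sum_primesLE_log_div_le (show 1 ≤ N by omega)
  have : (∑ p ∈ primesLE N, log p / p) / log N ≤ 1 + 2 / log N := by
    rw [div_le_iff₀ hL]
    field_simp
    linarith
  have hV := hVN.trans hV2
  simp only [V] at hV
  linarith

theorem prod_primesLE_one_add_inv_le {N : ℕ} (hN : 2 ≤ N) :
    ∏ p ∈ primesLE N, (1 + (p : ℝ)⁻¹) ≤ exp 5 * log N := by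
  have hL : 0 < log N := log_pos (by exact_mod_cast hN)
  calc ∏ p ∈ primesLE N, (1 + (p : ℝ)⁻¹)
      ≤ ∏ p ∈ primesLE N, exp (p : ℝ)⁻¹ :=
        prod_le_prod (fun _ _ => by positivity) fun p _ => by
          linarith [add_one_le_exp (p : ℝ)⁻¹]
    _ = exp (∑ p ∈ primesLE N, (p : ℝ)⁻¹) := (exp_sum _ _).symm
    _ ≤ exp (log (log N) + 5) := exp_le_exp.mpr (sum_primesLE_inv_le hN)
    _ = exp 5 * log N := by rw [exp_add, exp_log hL, mul_comm]

theorem tau_prod_div_le {n : ℤ} {s : Finset ℕ} (hs : ∀ p ∈ s, p.Prime ∧ 4 * tau n p ≤ p + 1) :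
    (tau n (∏ p ∈ s, p) : ℝ) / (∏ p ∈ s, p : ℕ) ≤ 4⁻¹ ^ #s * ∏ p ∈ s, (1 + (p : ℝ)⁻¹) := by
  rw [tau_prod_primes n fun p hp => (hs p hp).1, Nat.cast_prod, Nat.cast_prod,
    ← prod_div_distrib, ← prod_const, ← prod_mul_distrib]
  refine prod_le_prod (fun _ _ => by positivity) fun p hp => ?_
  have hp0 : (0 : ℝ) < p := by exact_mod_cast (hs p hp).1.pos
  have h4 : (4 * tau n p : ℝ) ≤ p + 1 := by exact_mod_cast (hs p hp).2
  rw [div_le_iff₀ hp0]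
  field_simp
  linarith

theorem ZMod.intCast_ne_zero_of_gcd_eq_one_s17 {n : ℤ} {c p : ℕ} (hgcd : Int.gcd n c = 1)
    (hpc : p ∣ c) (hp : p ≠ 1) : (n : ZMod p) ≠ 0 := by
  rw [Ne, ZMod.intCast_zmod_eq_zero_iff_dvd]
  intro hpn
  exact hp (Nat.dvd_one.mp (hgcd ▸ Nat.dvd_gcd (Int.ofNat_dvd_left.mp hpn) hpc))

theorem filter_range_prime_ne_two_eq_erase (N : ℕ) :
    (range (N + 1)).filter (fun p => p.Prime ∧ p ≠ 2) = (primesLE N).erase 2 := by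
  ext p
  simp only [mem_filter, mem_range, mem_erase, mem_primesLE, Nat.lt_succ_iff]
  tauto

theorem tau_prod_odd_primesLE_div_le {N : ℕ} (hN : 2 ≤ N) {n : ℤ}
    (h : ∀ p ∈ (primesLE N).erase 2, 4 * tau n p ≤ p + 1) :
    (tau n (∏ p ∈ (primesLE N).erase 2, p) : ℝ) / (∏ p ∈ (primesLE N).erase 2, p : ℕ) ≤
      4 * exp 5 * ((4 : ℝ) ^ Nat.primeCounting N)⁻¹ * log N := by
  set s := (primesLE N).erase 2
  have hπ : #s + 1 = Nat.primeCounting N := by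
    rw [card_erase_add_one (mem_primesLE.mpr ⟨hN, Nat.prime_two⟩),
      Nat.primesLE_card_eq_primeCounting]
  calc (tau n (∏ p ∈ s, p) : ℝ) / (∏ p ∈ s, p : ℕ) ≤ 4⁻¹ ^ #s * ∏ p ∈ s, (1 + (p : ℝ)⁻¹) :=
        tau_prod_div_le fun p hp => ⟨Nat.prime_of_mem_primesLE (mem_of_mem_erase hp), h p hp⟩
    _ ≤ 4⁻¹ ^ #s * ∏ p ∈ primesLE N, (1 + (p : ℝ)⁻¹) := by
        gcongr
        · intro p _ _
          linarith [inv_nonneg.mpr (Nat.cast_nonneg (α := ℝ) p)]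
        · exact erase_subset 2 (primesLE N)
    _ ≤ 4⁻¹ ^ #s * (exp 5 * log N) := by
        gcongr
        exact prod_primesLE_one_add_inv_le hN
    _ = 4 * exp 5 * ((4 : ℝ) ^ Nat.primeCounting N)⁻¹ * log N := by
        rw [← hπ, pow_succ, inv_pow]
        field_simp

theorem stmt_17 :
    ∃ C : ℝ, 0 < C ∧ ∀ B : ℝ, 3 ≤ B → ∀ n : ℤ, ∀ c : ℕ,
      c = ∏ p ∈ (Finset.range (⌊B⌋₊ + 1)).filter (fun p => p.Prime ∧ p ≠ 2), p →
      Int.gcd n c = 1 →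
      (∀ (p : ℕ) (hp : p.Prime), (p : ℝ) ≤ B → p % 4 = 1 →
        @legendreSym p ⟨hp⟩ n = -1) →
      (tau n c : ℝ) / c ≤
        C * ((4 : ℝ) ^ Nat.primeCounting ⌊B⌋₊)⁻¹ * Real.log B := by
  refine ⟨4 * exp 5, by positivity, fun B hB n c hc hgcd hleg => ?_⟩
  have hN : 3 ≤ ⌊B⌋₊ := Nat.le_floor (by exact_mod_cast hB)
  rw [filter_range_prime_ne_two_eq_erase] at hc
  have hbound : ∀ p ∈ (primesLE ⌊B⌋₊).erase 2, 4 * tau n p ≤ p + 1 := by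
    intro p hp
    have hpc : p ∣ c := hc ▸ dvd_prod_of_mem _ hp
    obtain ⟨hp2, hpB, hp⟩ := by simpa [mem_primesLE] using hp
    have : Fact p.Prime := ⟨hp⟩
    exact four_mul_tau_prime_le hp2 (ZMod.intCast_ne_zero_of_gcd_eq_one_s17 hgcd hpc hp.ne_one)
      fun h4 => hleg p hp ((Nat.le_floor_iff (by linarith)).mp hpB) h4
  have hlog : log ⌊B⌋₊ ≤ log B := log_le_log (by positivity) (Nat.floor_le (by linarith))
  calc (tau n c : ℝ) / c ≤ 4 * exp 5 * ((4 : ℝ) ^ Nat.primeCounting ⌊B⌋₊)⁻¹ * log ⌊B⌋₊ := by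
        subst hc
        exact tau_prod_odd_primesLE_div_le (by omega) hbound
    _ ≤ 4 * exp 5 * ((4 : ℝ) ^ Nat.primeCounting ⌊B⌋₊)⁻¹ * log B := by gcongr
end
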